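/- arXiv:2001.08462 — 5 statements merged into one kernel-verified Lean document; each statement's English description precedes it below -/
import Mathlib

section
/- Let A and B be commuting N×N matrices with nonnegative real entries. Then there exists a nonzero nonnegative vector w and nonnegative reals λ, μ such that A w = λ w and B w = μ w. -/
open Filter Topology

theorem coneEig {N : ℕ} (B : Matrix (Fin N) (Fin N) ℝ) (hB : ∀ i j, 0 ≤ B i j)
    (F : Set (Fin N → ℝ)) (hFnn : ∀ v ∈ F, ∀ i, 0 ≤ v i)
    (hclosed : IsClosed F)
    (hadd : ∀ v ∈ F, ∀ w' ∈ F, v + w' ∈ F)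
    (hsmul : ∀ (c : ℝ), 0 ≤ c → ∀ v ∈ F, c • v ∈ F)
    (hBF : ∀ v ∈ F, B.mulVec v ∈ F)
    (u : Fin N → ℝ) (hu : u ∈ F) (hu0 : ∃ i, 0 < u i)
    (hsupp : ∀ v ∈ F, ∀ i, u i = 0 → v i = 0) :
    ∃ w ∈ F, (∃ i, 0 < w i) ∧ ∃ mu : ℝ, 0 ≤ mu ∧ B.mulVec w = mu • w := by
  -- iterates
  set p : ℕ → (Fin N → ℝ) := fun k => B.mulVec^[k] u with hp
  have hpsucc : ∀ k, p (k + 1) = B.mulVec (p k) := by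
    intro k; simp only [hp, Function.iterate_succ_apply']
  have hpF : ∀ k, p k ∈ F := by
    intro k; induction k with
    | zero => exact hu
    | succ k ih => rw [hpsucc]; exact hBF _ ih
  have hpnn : ∀ k i, 0 ≤ p k i := fun k i => hFnn _ (hpF k) i
  set s : ℕ → ℝ := fun k => ∑ i, p k i with hs
  have hsnn : ∀ k, 0 ≤ s k := fun k => Finset.sum_nonneg fun i _ => hpnn k i
  have hps : ∀ k i, p k i ≤ s k := by
    intro k i
    exact Finset.single_le_sum (fun j _ => hpnn k j) (Finset.mem_univ i)
  set C : ℝ := ∑ i, ∑ j, B i j with hC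
  have hC0 : 0 ≤ C := Finset.sum_nonneg fun i _ => Finset.sum_nonneg fun j _ => hB i j
  have hsC : ∀ k, s (k + 1) ≤ C * s k := by
    intro k
    have : s (k+1) = ∑ j, (∑ i, B i j) * p k j := by
      simp only [hs, hpsucc k, Matrix.mulVec, dotProduct]
      rw [Finset.sum_comm]
      simp [Finset.sum_mul]
    rw [this, hC, Finset.mul_sum]
    apply Finset.sum_le_sum
    intro j _
    apply mul_le_mul_of_nonneg_right _ (hpnn k j)
    calc ∑ i, B i j ≤ ∑ i, ∑ j', B i j' := by
          apply Finset.sum_le_sum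
          intro i _
          exact Finset.single_le_sum (fun j' _ => hB i j') (Finset.mem_univ j)
      _ = C := rfl
  have hsCk : ∀ k, s k ≤ C ^ k * s 0 := by
    intro k; induction k with
    | zero => simp
    | succ k ih =>
      calc s (k+1) ≤ C * s k := hsC k
        _ ≤ C * (C ^ k * s 0) := by
            exact mul_le_mul_of_nonneg_left ih hC0
        _ = C ^ (k+1) * s 0 := by ring
  -- the set of t where the resolvent series converges
  set T : Set ℝ := {t | 0 < t ∧ Summable (fun k => s k / t ^ (k + 1))} with hT
  have hTne : (C + 1) ∈ T := by
    constructor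
    · linarith
    · apply Summable.of_nonneg_of_le
        (f := fun k => (s 0 / (C+1)) * (C / (C + 1)) ^ k)
        (fun k => div_nonneg (hsnn k) (by positivity))
      · intro k
        rw [div_pow, div_mul_div_comm, ← pow_succ']
        apply div_le_div_of_nonneg_right _ (by positivity)
        calc s k ≤ C ^ k * s 0 := hsCk k
          _ = s 0 * C ^ k := by ring
      · exact Summable.mul_left _ (summable_geometric_of_lt_one (by positivity)
          (by rw [div_lt_one (by linarith)]; linarith))
  have hTbdd : BddBelow T := ⟨0, fun t ht => le_of_lt ht.1⟩
  set r : ℝ := sInf T with hr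
  have hr0 : 0 ≤ r := le_csInf ⟨_, hTne⟩ (fun t ht => le_of_lt ht.1)
  have hTup : ∀ t ∈ T, ∀ t', t ≤ t' → t' ∈ T := by
    intro t ht t' htt'
    have ht0 : 0 < t := ht.1
    have ht'0 : 0 < t' := lt_of_lt_of_le ht0 htt'
    refine ⟨ht'0, Summable.of_nonneg_of_le (fun k => div_nonneg (hsnn k) (by positivity)) (fun k => ?_) ht.2⟩
    apply div_le_div_of_nonneg_left (hsnn k) (by positivity)
    exact pow_le_pow_left₀ (le_of_lt ht0) htt' _
  have hmemT : ∀ t, r < t → t ∈ T := by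
    intro t hrt
    obtain ⟨t', ht', ht't⟩ := (csInf_lt_iff hTbdd ⟨_, hTne⟩).mp hrt
    exact hTup t' ht' t (le_of_lt ht't)
  -- coordinatewise summability
  have hsum_i : ∀ t ∈ T, ∀ i, Summable (fun k => p k i / t ^ (k + 1)) := by
    intro t ht i
    have ht0 : (0:ℝ) < t := ht.1
    apply Summable.of_nonneg_of_le (fun k => div_nonneg (hpnn k i) (le_of_lt (pow_pos ht0 _)))
      (fun k => div_le_div_of_nonneg_right (hps k i) (le_of_lt (pow_pos ht0 _))) ht.2
  -- the resolvent vector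
  set x : ℝ → (Fin N → ℝ) := fun t i => ∑' k, p k i / t ^ (k + 1) with hx
  have hxnn : ∀ t, (0:ℝ) < t → ∀ i, 0 ≤ x t i := by
    intro t ht0 i
    exact tsum_nonneg fun k => div_nonneg (hpnn k i) (le_of_lt (pow_pos ht0 _))
  have hxF : ∀ t ∈ T, x t ∈ F := by
    intro t ht
    have h0F : (0 : Fin N → ℝ) ∈ F := by
      have := hsmul 0 le_rfl u hu
      simpa using this
    set q : ℕ → (Fin N → ℝ) := fun K => ∑ k ∈ Finset.range K, (t ^ (k+1))⁻¹ • p k with hq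
    have hqF : ∀ K, q K ∈ F := by
      intro K; induction K with
      | zero => simpa [hq] using h0F
      | succ K ih =>
        have : q (K + 1) = q K + (t ^ (K+1))⁻¹ • p K := by
          simp [hq, Finset.sum_range_succ]
        rw [this]
        exact hadd _ ih _ (hsmul _ (by have := ht.1; positivity) _ (hpF K))
    have hqtend : Tendsto q atTop (𝓝 (x t)) := by
      rw [tendsto_pi_nhds]
      intro i
      have hsummi := hsum_i t ht i
      have := hsummi.hasSum.tendsto_sum_nat
      convert this using 2 with K
      simp [hq, div_eq_inv_mul, Finset.sum_apply]
    exact hclosed.mem_of_tendsto hqtend (Eventually.of_forall hqF)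
  have hphix : ∀ t ∈ T, ∑ i, x t i = ∑' k, s k / t ^ (k + 1) := by
    intro t ht
    rw [← Summable.tsum_finsetSum (fun i _ => hsum_i t ht i)]
    congr 1; funext k
    rw [hs, ← Finset.sum_div]
  have hres : ∀ t ∈ T, B.mulVec (x t) = t • x t - u := by
    intro t ht
    have ht0 : (0:ℝ) < t := ht.1
    funext i
    have hsum1 : ∀ j, Summable (fun k => B i j * (p k j / t ^ (k+1))) :=
      fun j => (hsum_i t ht j).mul_left _
    have hL : B.mulVec (x t) i = ∑' k, p (k+1) i / t ^ (k + 1) := by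
      simp only [Matrix.mulVec, dotProduct, hx]
      calc ∑ j, B i j * ∑' k, p k j / t ^ (k+1)
          = ∑ j, ∑' k, B i j * (p k j / t ^ (k+1)) := by
            congr 1; funext j; exact (tsum_mul_left).symm
        _ = ∑' k, ∑ j, B i j * (p k j / t ^ (k+1)) := (Summable.tsum_finsetSum (fun j _ => hsum1 j)).symm
        _ = ∑' k, p (k+1) i / t ^ (k+1) := by
            congr 1; funext k
            rw [hpsucc k]
            simp [Matrix.mulVec, dotProduct, Finset.sum_div, mul_div_assoc]
    have hsum0 : Summable (fun k => p k i / t ^ k) := by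
      apply Summable.of_nonneg_of_le (fun k => div_nonneg (hpnn k i) (le_of_lt (pow_pos ht0 _)))
        (fun k => ?_) (ht.2.mul_left t)
      have : t * (s k / t ^ (k+1)) = s k / t ^ k := by
        field_simp [pow_succ]; ring
      rw [this]
      exact div_le_div_of_nonneg_right (hps k i) (le_of_lt (pow_pos ht0 _))
    have hR : t * x t i = ∑' k, p k i / t ^ k := by
      rw [hx]
      rw [← tsum_mul_left]
      congr 1; funext k
      field_simp [pow_succ]; ring
    have hshift : ∑' k, p k i / t ^ k = p 0 i + ∑' k, p (k+1) i / t ^ (k+1) := by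
      simpa using Summable.tsum_eq_zero_add hsum0
    have : (t • x t - u) i = t * x t i - u i := by simp
    rw [this, hR, hshift, hL]
    simp [hp]
  -- monotonicity of the total mass in t
  have hanti : ∀ t ∈ T, ∀ t', t ≤ t' → ∑ i, x t' i ≤ ∑ i, x t i := by
    intro t ht t' htt'
    have ht' : t' ∈ T := hTup t ht t' htt'
    rw [hphix t ht, hphix t' ht']
    apply Summable.tsum_le_tsum _ ht'.2 ht.2
    intro k
    apply div_le_div_of_nonneg_left (hsnn k) (pow_pos ht.1 _)
    exact pow_le_pow_left₀ (le_of_lt ht.1) htt' _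
  have hs0pos : 0 < s 0 := by
    obtain ⟨i, hi⟩ := hu0
    have : u i ≤ s 0 := by simpa [hp] using hps 0 i
    linarith
  -- unboundedness of the total mass near r
  have hunb : ∀ M : ℝ, ∃ t, r < t ∧ M ≤ ∑ i, x t i := by
    by_contra hbdd
    push_neg at hbdd
    obtain ⟨M, hM⟩ := hbdd
    rcases eq_or_lt_of_le hr0 with hreq | hrpos
    · -- r = 0 : mass ≥ s 0 / t → ∞
      set t : ℝ := s 0 / (|M| + 1) with ht_def
      have ht0 : 0 < t := by positivity
      have htr : r < t := by rw [← hreq]; exact ht0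
      have htT : t ∈ T := hmemT t htr
      have h1 : s 0 / t ≤ ∑ i, x t i := by
        rw [hphix t htT]
        have := Summable.le_tsum htT.2 0 (fun j _ => div_nonneg (hsnn j) (le_of_lt (pow_pos ht0 _)))
        simpa [pow_one] using this
      have h2 : s 0 / t = |M| + 1 := by
        rw [ht_def]; field_simp
      have := hM t htr
      have habs : M ≤ |M| := le_abs_self M
      rw [h2] at h1
      linarith
    · -- r > 0 : resolve at r, get a contradiction with minimality
      -- partial sums at r are bounded by M
      have hpartial : ∀ K, ∑ k ∈ Finset.range K, s k / r ^ (k+1) ≤ M := by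
        intro K
        have hcont : Tendsto (fun t => ∑ k ∈ Finset.range K, s k / t ^ (k+1))
            (𝓝[>] r) (𝓝 (∑ k ∈ Finset.range K, s k / r ^ (k+1))) := by
          apply tendsto_nhdsWithin_of_tendsto_nhds
          apply tendsto_finset_sum
          intro k _
          apply Tendsto.div tendsto_const_nhds (Tendsto.pow tendsto_id _)
          exact pow_ne_zero _ (ne_of_gt hrpos)
        apply le_of_tendsto hcont
        filter_upwards [self_mem_nhdsWithin] with t ht'
        have htT : t ∈ T := hmemT t ht'
        calc ∑ k ∈ Finset.range K, s k / t ^ (k+1)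
            ≤ ∑' k, s k / t ^ (k+1) :=
              Summable.sum_le_tsum _ (fun k _ => div_nonneg (hsnn k) (le_of_lt (pow_pos htT.1 _))) htT.2
          _ = ∑ i, x t i := (hphix t htT).symm
          _ ≤ M := le_of_lt (hM t ht')
      have hsumr : Summable (fun k => s k / r ^ (k+1)) :=
        summable_of_sum_range_le (fun k => div_nonneg (hsnn k) (le_of_lt (pow_pos hrpos _))) hpartial
      have hrT : r ∈ T := ⟨hrpos, hsumr⟩
      set xr : Fin N → ℝ := x r with hxr
      have hxrF : xr ∈ F := hxF r hrT
      have hresr : B.mulVec xr = r • xr - u := hres r hrT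
      have hxrlb : ∀ i, u i / r ≤ xr i := by
        intro i
        have := Summable.le_tsum (hsum_i r hrT i) 0
          (fun j _ => div_nonneg (hpnn j i) (le_of_lt (pow_pos hrpos _)))
        simpa [hp, pow_one] using this
      -- Define θ < r with B xr ≤ θ • xr
      have hJne : (Finset.univ.filter (fun i => 0 < u i)).Nonempty := by
        obtain ⟨i, hi⟩ := hu0
        exact ⟨i, by simp [hi]⟩
      set θ : ℝ := (Finset.univ.filter (fun i => 0 < u i)).sup' hJne (fun i => r - u i / xr i) with hθ
      have hxrpos : ∀ i, 0 < u i → 0 < xr i := by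
        intro i hi
        have := hxrlb i
        have : 0 < u i / r := div_pos hi hrpos
        linarith [hxrlb i]
      have hθr : θ < r := by
        rw [hθ, Finset.sup'_lt_iff]
        intro i hi
        simp only [Finset.mem_filter] at hi
        have h1 : 0 < u i / xr i := div_pos hi.2 (hxrpos i hi.2)
        linarith
      have hθ0 : 0 ≤ θ := by
        obtain ⟨i, hi⟩ := hJne
        simp only [Finset.mem_filter] at hi
        have h1 : r - u i / xr i ≤ θ := Finset.le_sup' (fun i => r - u i / xr i) (Finset.mem_filter.mpr ⟨Finset.mem_univ i, hi.2⟩)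
        have h2 : u i / xr i ≤ r := by
          rw [div_le_iff₀ (hxrpos i hi.2)]
          have := hxrlb i
          rw [div_le_iff₀ hrpos] at this
          linarith [this]
        linarith
      have hkey : ∀ i, B.mulVec xr i ≤ θ * xr i := by
        intro i
        by_cases hui : 0 < u i
        · have h1 : r - u i / xr i ≤ θ := Finset.le_sup' (fun i => r - u i / xr i) (Finset.mem_filter.mpr ⟨Finset.mem_univ i, hui⟩)
          have h2 : B.mulVec xr i = r * xr i - u i := by rw [hresr]; simp
          rw [h2]
          have hxi : 0 < xr i := hxrpos i hui
          have := mul_le_mul_of_nonneg_right h1 (le_of_lt hxi)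
          rw [sub_mul, div_mul_cancel₀ _ (ne_of_gt hxi)] at this
          linarith
        · have hui0 : u i = 0 := le_antisymm (not_lt.mp hui) (hFnn u hu i)
          have hxri : xr i = 0 := hsupp xr hxrF i hui0
          have h2 : B.mulVec xr i = r * xr i - u i := by rw [hresr]; simp
          rw [h2, hxri, hui0]
          simp
      -- monotonicity of mulVec
      have hmono : ∀ v w' : Fin N → ℝ, (∀ i, v i ≤ w' i) → ∀ i, B.mulVec v i ≤ B.mulVec w' i := by
        intro v w' hvw i
        simp only [Matrix.mulVec, dotProduct]
        apply Finset.sum_le_sum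
        intro j _
        exact mul_le_mul_of_nonneg_left (hvw j) (hB i j)
      have hiter : ∀ k i, p k i ≤ r * θ ^ k * xr i := by
        intro k
        induction k with
        | zero =>
          intro i
          have : u i ≤ r * xr i := by
            have := hxrlb i
            rw [div_le_iff₀ hrpos] at this
            linarith [this]
          simpa [hp] using this
        | succ k ih =>
          intro i
          rw [hpsucc k]
          calc B.mulVec (p k) i ≤ B.mulVec (fun j => r * θ ^ k * xr j) i := hmono _ _ ih i
            _ = r * θ ^ k * B.mulVec xr i := by
                simp only [Matrix.mulVec, dotProduct, Finset.mul_sum]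
                congr 1; funext j; ring
            _ ≤ r * θ ^ k * (θ * xr i) := by
                apply mul_le_mul_of_nonneg_left (hkey i)
                positivity
            _ = r * θ ^ (k+1) * xr i := by ring
      have hsθ : ∀ k, s k ≤ (r * ∑ i, xr i) * θ ^ k := by
        intro k
        rw [hs]
        calc ∑ i, p k i ≤ ∑ i, r * θ ^ k * xr i := Finset.sum_le_sum (fun i _ => hiter k i)
          _ = (r * ∑ i, xr i) * θ ^ k := by rw [← Finset.mul_sum]; ring
      set t' : ℝ := (θ + r) / 2 with ht'
      have ht'pos : 0 < t' := by rw [ht']; linarith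
      have hθt' : θ < t' := by rw [ht']; linarith
      have ht'r : t' < r := by rw [ht']; linarith
      have ht'T : t' ∈ T := by
        refine ⟨ht'pos, ?_⟩
        apply Summable.of_nonneg_of_le
          (f := fun k => ((r * ∑ i, xr i) / t') * (θ / t') ^ k)
          (fun k => div_nonneg (hsnn k) (le_of_lt (pow_pos ht'pos _)))
        · intro k
          have heq : ((r * ∑ i, xr i) / t') * (θ / t') ^ k
              = ((r * ∑ i, xr i) * θ ^ k) / t' ^ (k+1) := by
            rw [div_pow, div_mul_div_comm, ← pow_succ']
          rw [heq]
          exact div_le_div_of_nonneg_right (hsθ k) (le_of_lt (pow_pos ht'pos _))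
        · apply Summable.mul_left
          apply summable_geometric_of_lt_one (by positivity)
          rw [div_lt_one ht'pos]; exact hθt'
      have := csInf_le hTbdd ht'T
      rw [← hr] at this
      linarith
  -- a sequence tₙ ↓ r with mass → ∞
  have hseq : ∀ n : ℕ, ∃ t, r < t ∧ t ≤ r + 1/(n+1) ∧ (n+1 : ℝ) ≤ ∑ i, x t i := by
    intro n
    obtain ⟨t₁, ht₁r, ht₁M⟩ := hunb (n+1)
    have hrlt : r < min t₁ (r + 1/(n+1)) := by
      apply lt_min ht₁r
      have : (0:ℝ) < 1/(n+1) := by positivity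
      linarith
    refine ⟨min t₁ (r + 1/(n+1)), hrlt, min_le_right _ _, ?_⟩
    calc (n+1 : ℝ) ≤ ∑ i, x t₁ i := ht₁M
      _ ≤ ∑ i, x (min t₁ (r + 1/(n+1))) i :=
          hanti _ (hmemT _ hrlt) t₁ (min_le_left _ _)
  choose t htr htub htM using hseq
  have htT : ∀ n, t n ∈ T := fun n => hmemT _ (htr n)
  have hmass_pos : ∀ n, (0:ℝ) < ∑ i, x (t n) i := fun n => lt_of_lt_of_le (by positivity) (htM n)
  set y : ℕ → (Fin N → ℝ) := fun n => (∑ i, x (t n) i)⁻¹ • x (t n) with hy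
  have hyF : ∀ n, y n ∈ F := fun n => hsmul _ (le_of_lt (inv_pos.mpr (hmass_pos n))) _ (hxF _ (htT n))
  have hynn : ∀ n i, 0 ≤ y n i := fun n i => hFnn _ (hyF n) i
  have hysum : ∀ n, ∑ i, y n i = 1 := by
    intro n
    simp only [hy, Pi.smul_apply, smul_eq_mul, ← Finset.mul_sum]
    exact inv_mul_cancel₀ (ne_of_gt (hmass_pos n))
  -- compactness
  set K : Set (Fin N → ℝ) := {v | (∀ i, 0 ≤ v i) ∧ ∑ i, v i = 1} with hK
  have hKcl : IsClosed K := by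
    have hKeq : K = (⋂ i, {v : Fin N → ℝ | 0 ≤ v i}) ∩ {v : Fin N → ℝ | ∑ i, v i = 1} := by
      ext v; simp [hK, Set.mem_iInter]
    rw [hKeq]
    exact IsClosed.inter (isClosed_iInter (fun i => isClosed_le continuous_const (continuous_apply i)))
      (isClosed_eq (continuous_finset_sum _ (fun i _ => continuous_apply i)) continuous_const)
  have hKbd : Bornology.IsBounded K := by
    apply Bornology.IsBounded.subset (Metric.isBounded_closedBall (x := (0 : Fin N → ℝ)) (r := 1))
    intro v hv
    simp only [Metric.mem_closedBall, dist_zero_right]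
    rw [pi_norm_le_iff_of_nonneg zero_le_one]
    intro i
    rw [Real.norm_eq_abs, abs_of_nonneg (hv.1 i)]
    rw [← hv.2]
    exact Finset.single_le_sum (fun j _ => hv.1 j) (Finset.mem_univ i)
  have hKcomp : IsCompact K := Metric.isCompact_of_isClosed_isBounded hKcl hKbd
  have hyK : ∀ n, y n ∈ K := fun n => ⟨hynn n, hysum n⟩
  obtain ⟨w, hwK, σ, hσ, hconv⟩ := hKcomp.tendsto_subseq hyK
  have hwF : w ∈ F := hclosed.mem_of_tendsto hconv (Eventually.of_forall (fun n => hyF (σ n)))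
  have hwpos : ∃ i, 0 < w i := by
    by_contra hc
    push_neg at hc
    have h1 : ∑ i, w i ≤ 0 := Finset.sum_nonpos (fun i _ => hc i)
    rw [hwK.2] at h1
    linarith
  -- limits
  have htlim : Tendsto (fun n => t (σ n)) atTop (𝓝 r) := by
    have h1 : Tendsto (fun n : ℕ => r + 1/((n:ℝ)+1)) atTop (𝓝 (r + 0)) := by
      apply Tendsto.const_add
      exact tendsto_one_div_add_atTop_nhds_zero_nat
    rw [add_zero] at h1
    have h2 : Tendsto (fun n : ℕ => t n) atTop (𝓝 r) := by
      apply tendsto_of_tendsto_of_tendsto_of_le_of_le (tendsto_const_nhds) h1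
        (fun n => le_of_lt (htr n)) (fun n => htub n)
    exact h2.comp hσ.tendsto_atTop
  have hclim : Tendsto (fun n => (∑ i, x (t (σ n)) i)⁻¹) atTop (𝓝 0) := by
    have h1 : ∀ n : ℕ, (∑ i, x (t (σ n)) i)⁻¹ ≤ 1/((n:ℝ)+1) := by
      intro n
      rw [one_div]
      apply inv_anti₀ (by positivity)
      calc ((n:ℝ)+1) ≤ (σ n : ℝ) + 1 := by
            have h : n ≤ σ n := hσ.le_apply
            have : (n:ℝ) ≤ (σ n : ℝ) := Nat.cast_le.mpr h
            linarith
        _ ≤ ∑ i, x (t (σ n)) i := htM (σ n)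
    apply tendsto_of_tendsto_of_tendsto_of_le_of_le tendsto_const_nhds
      tendsto_one_div_add_atTop_nhds_zero_nat
      (fun n => le_of_lt (inv_pos.mpr (hmass_pos (σ n)))) h1
  have hcont_mulVec : Continuous (fun v : Fin N → ℝ => B.mulVec v) := by
    apply continuous_pi
    intro i
    simp only [Matrix.mulVec, dotProduct]
    exact continuous_finset_sum _ (fun j _ => continuous_const.mul (continuous_apply j))
  have hXlim : Tendsto (fun n => B.mulVec (y (σ n))) atTop (𝓝 (B.mulVec w)) :=
    (hcont_mulVec.tendsto w).comp hconv
  have hByn : ∀ n, B.mulVec (y n) = t n • y n - (∑ i, x (t n) i)⁻¹ • u := by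
    intro n
    rw [hy]
    simp only
    rw [Matrix.mulVec_smul, hres _ (htT n), smul_sub, smul_comm]
  have hRlim : Tendsto (fun n => t (σ n) • y (σ n) - (∑ i, x (t (σ n)) i)⁻¹ • u)
      atTop (𝓝 (r • w - (0:ℝ) • u)) := by
    apply Tendsto.sub
    · exact Tendsto.smul htlim hconv
    · exact Tendsto.smul hclim tendsto_const_nhds
  rw [zero_smul, sub_zero] at hRlim
  have hfinal : B.mulVec w = r • w := by
    apply tendsto_nhds_unique hXlim
    convert hRlim using 2 with n
    exact hByn (σ n)
  exact ⟨w, hwF, hwpos, r, hr0, hfinal⟩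

lemma mulVec_nn {N : ℕ} (M : Matrix (Fin N) (Fin N) ℝ) (hM : ∀ i j, 0 ≤ M i j)
    (v : Fin N → ℝ) (hv : ∀ i, 0 ≤ v i) (i : Fin N) : 0 ≤ M.mulVec v i := by
  simp only [Matrix.mulVec, dotProduct]
  exact Finset.sum_nonneg (fun j _ => mul_nonneg (hM i j) (hv j))

theorem stmt_0 {N : ℕ} (hN : 0 < N)
    (A B : Matrix (Fin N) (Fin N) ℝ)
    (hA : ∀ i j, 0 ≤ A i j) (hB : ∀ i j, 0 ≤ B i j)
    (hcomm : A * B = B * A) :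
    ∃ w : Fin N → ℝ, (∀ i, 0 ≤ w i) ∧ (∃ i, 0 < w i) ∧
      ∃ lam mu : ℝ, 0 ≤ lam ∧ 0 ≤ mu ∧
        A.mulVec w = lam • w ∧ B.mulVec w = mu • w := by
  -- Step 1: a nonnegative eigenvector of A
  set F₀ : Set (Fin N → ℝ) := {v | ∀ i, 0 ≤ v i} with hF₀
  have hF₀cl : IsClosed F₀ := by
    have : F₀ = ⋂ i, {v : Fin N → ℝ | 0 ≤ v i} := by ext v; simp [hF₀, Set.mem_iInter]
    rw [this]
    exact isClosed_iInter (fun i => isClosed_le continuous_const (continuous_apply i))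
  obtain ⟨w₁, hw₁F, hw₁pos, lam, hlam0, hw₁eig⟩ :=
    coneEig A hA F₀ (fun v hv => hv) hF₀cl
      (fun v hv w hw i => add_nonneg (hv i) (hw i))
      (fun c hc v hv i => by simpa using mul_nonneg hc (hv i))
      (fun v hv i => mulVec_nn A hA v hv i)
      (fun _ => 1) (fun i => zero_le_one) ⟨⟨0, hN⟩, one_pos⟩
      (fun v hv i hi => absurd hi one_ne_zero)
  -- Step 2: iterates of B applied to w₁
  set m : ℕ → (Fin N → ℝ) := fun k => B.mulVec^[k] w₁ with hm
  have hmsucc : ∀ k, m (k + 1) = B.mulVec (m k) := by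
    intro k; simp only [hm, Function.iterate_succ_apply']
  have hmnn : ∀ k i, 0 ≤ m k i := by
    intro k
    induction k with
    | zero => exact hw₁F
    | succ k ih =>
      intro i
      rw [hmsucc]
      exact mulVec_nn B hB (m k) ih i
  have hAm : ∀ k, A.mulVec (m k) = lam • m k := by
    intro k
    induction k with
    | zero => exact hw₁eig
    | succ k ih =>
      rw [hmsucc k, Matrix.mulVec_mulVec, hcomm, ← Matrix.mulVec_mulVec, ih,
        Matrix.mulVec_smul]
  set W : ℕ → (Fin N → ℝ) := fun M => ∑ k ∈ Finset.range (M+1), m k with hW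
  have hWnn : ∀ M i, 0 ≤ W M i := by
    intro M i
    rw [hW]
    simp only [Finset.sum_apply]
    exact Finset.sum_nonneg (fun k _ => hmnn k i)
  have hWm : ∀ M k, k ∈ Finset.range (M+1) → ∀ i, W M i = 0 → m k i = 0 := by
    intro M k hk i hWi
    have h := (Finset.sum_eq_zero_iff_of_nonneg (fun k _ => hmnn k i)).mp
      (by rw [hW] at hWi; simpa [Finset.sum_apply] using hWi)
    exact h k hk
  have hWpos : ∀ M, ∃ i, 0 < W M i := by
    intro M
    obtain ⟨i, hi⟩ := hw₁pos
    refine ⟨i, lt_of_lt_of_le hi ?_⟩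
    rw [hW]
    simp only [Finset.sum_apply]
    have : w₁ i = m 0 i := rfl
    rw [this]
    exact Finset.single_le_sum (fun k _ => hmnn k i) (by simp)
  -- Step 3: pigeonhole to find a B-closed support level
  have hpigeon : ∃ M, ∀ i, W M i = 0 → m (M+1) i = 0 := by
    by_contra hc
    push_neg at hc
    set g : ℕ → Finset (Fin N) := fun M => Finset.univ.filter (fun i => 0 < W M i) with hg
    have hmono : ∀ M, g M ⊆ g (M+1) := by
      intro M i hi
      simp only [hg, Finset.mem_filter, Finset.mem_univ, true_and] at hi ⊢
      apply lt_of_lt_of_le hi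
      rw [hW]
      simp only [Finset.sum_apply]
      apply Finset.sum_le_sum_of_subset_of_nonneg
      · exact Finset.range_subset_range.mpr (by omega)
      · intro k _ _; exact hmnn k i
    have hstrict : ∀ M, (g M).card + 1 ≤ (g (M+1)).card := by
      intro M
      obtain ⟨i, hWi, hmi⟩ := hc M
      have hinotin : i ∉ g M := by simp [hg, hWi]
      have hiin : i ∈ g (M+1) := by
        simp only [hg, Finset.mem_filter, Finset.mem_univ, true_and]
        have h1 : 0 < m (M+1) i := lt_of_le_of_ne (hmnn (M+1) i) (Ne.symm hmi)
        apply lt_of_lt_of_le h1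
        rw [hW]
        simp only [Finset.sum_apply]
        exact Finset.single_le_sum (fun k _ => hmnn k i) (by simp)
      calc (g M).card + 1 = (insert i (g M)).card := by rw [Finset.card_insert_of_notMem hinotin]
        _ ≤ (g (M+1)).card := Finset.card_le_card (by
            intro j hj
            rcases Finset.mem_insert.mp hj with h | h
            · exact h ▸ hiin
            · exact hmono M h)
    have hcard : ∀ M, M + 1 ≤ (g M).card := by
      intro M
      induction M with
      | zero =>
        obtain ⟨i, hi⟩ := hWpos 0
        have : i ∈ g 0 := by simp [hg, hi]
        exact Finset.card_pos.mpr ⟨i, this⟩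
      | succ M ih => calc M + 2 ≤ (g M).card + 1 := by omega
                      _ ≤ (g (M+1)).card := hstrict M
    have h1 := hcard N
    have h2 : (g N).card ≤ N := by
      calc (g N).card ≤ (Finset.univ : Finset (Fin N)).card := Finset.card_le_card (by simp [hg])
        _ = N := by simp
    omega
  obtain ⟨M, hM⟩ := hpigeon
  set u' : Fin N → ℝ := W M with hu'
  have hu'nn : ∀ i, 0 ≤ u' i := hWnn M
  have hu'pos : ∃ i, 0 < u' i := hWpos M
  have hAu' : A.mulVec u' = lam • u' := by
    rw [hu', hW]
    have h1 : A.mulVec (∑ k ∈ Finset.range (M+1), m k) = ∑ k ∈ Finset.range (M+1), A.mulVec (m k) := by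
      simp only [← Matrix.mulVecLin_apply]
      exact map_sum A.mulVecLin m (Finset.range (M+1))
    rw [h1, Finset.smul_sum]
    exact Finset.sum_congr rfl (fun k _ => hAm k)
  have hBu' : B.mulVec u' = ∑ k ∈ Finset.range (M+1), m (k+1) := by
    rw [hu', hW]
    have h1 : B.mulVec (∑ k ∈ Finset.range (M+1), m k) = ∑ k ∈ Finset.range (M+1), B.mulVec (m k) := by
      simp only [← Matrix.mulVecLin_apply]
      exact map_sum B.mulVecLin m (Finset.range (M+1))
    rw [h1]
    exact Finset.sum_congr rfl (fun k _ => (hmsucc k).symm)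
  have hsuppB : ∀ i, u' i = 0 → B.mulVec u' i = 0 := by
    intro i hi
    rw [hBu']
    simp only [Finset.sum_apply]
    apply Finset.sum_eq_zero
    intro k hk
    rcases Nat.lt_or_ge (k+1) (M+1) with h | h
    · exact hWm M (k+1) (Finset.mem_range.mpr h) i hi
    · have hkM : k = M := by
        have := Finset.mem_range.mp hk; omega
      rw [hkM]
      exact hM i hi
  -- Step 4: the cone F of nonnegative A-eigenvectors supported in supp u'
  set F : Set (Fin N → ℝ) :=
    {v | (∀ i, 0 ≤ v i) ∧ A.mulVec v = lam • v ∧ ∀ i, u' i = 0 → v i = 0} with hF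
  have hFcl : IsClosed F := by
    have hFeq : F = (⋂ i, {v : Fin N → ℝ | 0 ≤ v i}) ∩
        ({v : Fin N → ℝ | A.mulVec v = lam • v} ∩
         ⋂ i, {v : Fin N → ℝ | u' i = 0 → v i = 0}) := by
      ext v
      simp only [hF, Set.mem_setOf_eq, Set.mem_inter_iff, Set.mem_iInter]
    rw [hFeq]
    have hc1 : Continuous (fun v : Fin N → ℝ => A.mulVec v) := by
      apply continuous_pi
      intro i
      simp only [Matrix.mulVec, dotProduct]
      exact continuous_finset_sum _ (fun j _ => continuous_const.mul (continuous_apply j))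
    have hc2 : Continuous (fun v : Fin N → ℝ => lam • v) := by
      exact (continuous_const (y := lam)).smul continuous_id
    refine IsClosed.inter (isClosed_iInter (fun i => isClosed_le continuous_const (continuous_apply i)))
      (IsClosed.inter (isClosed_eq hc1 hc2) (isClosed_iInter (fun i => ?_)))
    by_cases h : u' i = 0
    · have : {v : Fin N → ℝ | u' i = 0 → v i = 0} = {v : Fin N → ℝ | v i = 0} := by
        ext v; simp [h]
      rw [this]
      exact isClosed_eq (continuous_apply i) continuous_const
    · have : {v : Fin N → ℝ | u' i = 0 → v i = 0} = Set.univ := by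
        ext v; simp [h]
      rw [this]
      exact isClosed_univ
  obtain ⟨w, hwF, hwpos, mu, hmu0, hweig⟩ :=
    coneEig B hB F (fun v hv => hv.1) hFcl
      (fun v hv w hw => ⟨fun i => add_nonneg (hv.1 i) (hw.1 i),
        by rw [Matrix.mulVec_add, hv.2.1, hw.2.1, smul_add],
        fun i hi => by simp [hv.2.2 i hi, hw.2.2 i hi]⟩)
      (fun c hc v hv => ⟨fun i => by simpa using mul_nonneg hc (hv.1 i),
        by rw [Matrix.mulVec_smul, hv.2.1, smul_comm],
        fun i hi => by simp [hv.2.2 i hi]⟩)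
      (fun v hv => ⟨fun i => mulVec_nn B hB v hv.1 i,
        by rw [Matrix.mulVec_mulVec, hcomm, ← Matrix.mulVec_mulVec, hv.2.1, Matrix.mulVec_smul],
        fun i hi => by
          show ∑ j, B i j * v j = 0
          apply Finset.sum_eq_zero
          intro j _
          rcases eq_or_ne (v j) 0 with hvj | hvj
          · rw [hvj, mul_zero]
          · have hu'j : 0 < u' j := by
              rcases eq_or_lt_of_le (hu'nn j) with h | h
              · exact absurd (hv.2.2 j h.symm) hvj
              · exact h
            have hBij : B i j = 0 := by
              have hsum : ∑ j', B i j' * u' j' = 0 := by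
                have := hsuppB i hi
                simpa [Matrix.mulVec, dotProduct] using this
              have := (Finset.sum_eq_zero_iff_of_nonneg
                (fun j' _ => mul_nonneg (hB i j') (hu'nn j'))).mp hsum j (Finset.mem_univ j)
              rcases mul_eq_zero.mp this with h' | h'
              · exact h'
              · exact absurd h' (ne_of_gt hu'j)
            rw [hBij, zero_mul]⟩)
      u' ⟨hu'nn, hAu', fun i hi => hi⟩ hu'pos
      (fun v hv i hi => hv.2.2 i hi)
  exact ⟨w, hwF.1, hwpos, lam, mu, hlam0, hmu0, hwF.2.1, hweig⟩
end

section
/- Let (a_k) and (b_k) be sequences of nonnegative reals and define c_k = ∑_{n=0}^k a_n · b_{k-n}. Then limsup_k (1/k)·log(c_k) = max( limsup_k (1/k)·log(a_k), limsup_k (1/k)·log(b_k) ), provided a_0, b_0 ≥ 1. -/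
/-- The exponential growth rate `limsup (1/k)·log(f k)` of a nonnegative sequence,
valued in the extended reals with the convention `log 0 = -∞`. -/
noncomputable def expGrowthRate (f : ℕ → ℝ) : EReal :=
  Filter.limsup
    (fun k : ℕ => if f k = 0 then (⊥ : EReal) else ((Real.log (f k) / k : ℝ) : EReal))
    Filter.atTop

open Filter Real in
lemma expGrowthRate_mono {f g : ℕ → ℝ} (hf : ∀ k, 0 ≤ f k) (hfg : ∀ k, f k ≤ g k) :
    expGrowthRate f ≤ expGrowthRate g := by
  apply Filter.limsup_le_limsup (Filter.Eventually.of_forall ?_)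
  intro k
  by_cases h : f k = 0
  · simp [h]
  · have hf0 : 0 < f k := lt_of_le_of_ne (hf k) (Ne.symm h)
    have hg0 : 0 < g k := lt_of_lt_of_le hf0 (hfg k)
    simp only [h, hg0.ne', if_false]
    norm_cast
    rcases Nat.eq_zero_or_pos k with hk | hk
    · simp [hk]
    · have hk' : (0:ℝ) < k := by exact_mod_cast hk
      gcongr
      exact hfg k

theorem stmt_7 (a b : ℕ → ℝ)
    (ha : ∀ k, 0 ≤ a k) (hb : ∀ k, 0 ≤ b k)
    (ha0 : 1 ≤ a 0) (hb0 : 1 ≤ b 0) :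
    expGrowthRate (fun k => ∑ n ∈ Finset.range (k + 1), a n * b (k - n))
      = max (expGrowthRate a) (expGrowthRate b) := by
  set c : ℕ → ℝ := fun k => ∑ n ∈ Finset.range (k + 1), a n * b (k - n) with hc
  have hcnn : ∀ k, 0 ≤ c k := fun k =>
    Finset.sum_nonneg fun n _ => mul_nonneg (ha n) (hb (k - n))
  -- lower bounds
  have hac : ∀ k, a k ≤ c k := by
    intro k
    calc a k ≤ a k * b 0 := le_mul_of_one_le_right (ha k) hb0
    _ = a k * b (k - k) := by rw [Nat.sub_self]
    _ ≤ c k := Finset.single_le_sum (f := fun n => a n * b (k - n))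
        (fun n _ => mul_nonneg (ha n) (hb (k - n))) (Finset.self_mem_range_succ k)
  have hbc : ∀ k, b k ≤ c k := by
    intro k
    calc b k ≤ a 0 * b k := le_mul_of_one_le_left (hb k) ha0
    _ = a 0 * b (k - 0) := by rw [Nat.sub_zero]
    _ ≤ c k := Finset.single_le_sum (f := fun n => a n * b (k - n))
        (fun n _ => mul_nonneg (ha n) (hb (k - n)))
        (Finset.mem_range.2 (Nat.succ_pos k))
  have hlow : max (expGrowthRate a) (expGrowthRate b) ≤ expGrowthRate c :=
    max_le (expGrowthRate_mono ha hac) (expGrowthRate_mono hb hbc)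
  refine le_antisymm ?_ hlow
  -- upper bound: for every real t > max, expGrowthRate c ≤ t
  rw [← EReal.le_of_forall_lt_iff_le]
  intro t ht
  obtain ⟨hta, htb⟩ := max_lt_iff.mp ht
  have hea := Filter.eventually_lt_of_limsup_lt hta
  have heb := Filter.eventually_lt_of_limsup_lt htb
  rw [Filter.eventually_atTop] at hea heb
  obtain ⟨Ka, hKa⟩ := hea
  obtain ⟨Kb, hKb⟩ := heb
  set K : ℕ := max (max Ka Kb) 1 with hK
  set C : ℝ := 1 + ∑ k ∈ Finset.range K, (a k + b k) * Real.exp (-t * k) with hCdef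
  have hC1 : (1:ℝ) ≤ C := by
    have : (0:ℝ) ≤ ∑ k ∈ Finset.range K, (a k + b k) * Real.exp (-t * k) :=
      Finset.sum_nonneg fun k _ =>
        mul_nonneg (add_nonneg (ha k) (hb k)) (Real.exp_pos _).le
    linarith
  have hC0 : (0:ℝ) < C := lt_of_lt_of_le one_pos hC1
  -- key bound : a k ≤ C * exp (t * k), similarly b
  have key : ∀ (f : ℕ → ℝ), (∀ k, 0 ≤ f k) → (∀ k, f k ≤ a k + b k) →
      (∀ k, K ≤ k → (if f k = 0 then (⊥:EReal) else ((Real.log (f k) / k : ℝ) : EReal)) < t) →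
      ∀ k, f k ≤ C * Real.exp (t * k) := by
    intro f hf hfab hft k
    rcases le_or_gt K k with hk | hk
    · by_cases h0 : f k = 0
      · rw [h0]; positivity
      · have := hft k hk
        rw [if_neg h0] at this
        have hlt : Real.log (f k) / k < t := by exact_mod_cast this
        have hk1 : (1:ℕ) ≤ k := le_trans (le_max_right _ _) hk
        have hk0 : (0:ℝ) < k := by exact_mod_cast hk1
        have : Real.log (f k) < t * k := by
          rw [div_lt_iff₀ hk0] at hlt; linarith
        have hfpos : 0 < f k := lt_of_le_of_ne (hf k) (Ne.symm h0)
        calc f k = Real.exp (Real.log (f k)) := (Real.exp_log hfpos).symm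
        _ ≤ Real.exp (t * k) := Real.exp_le_exp.2 this.le
        _ ≤ C * Real.exp (t * k) := le_mul_of_one_le_left (Real.exp_pos _).le hC1
    · have hterm : f k * Real.exp (-t * k) ≤ C := by
        have h1 : f k * Real.exp (-t * k) ≤ (a k + b k) * Real.exp (-t * k) :=
          mul_le_mul_of_nonneg_right (hfab k) (Real.exp_pos _).le
        have h2 : (a k + b k) * Real.exp (-t * k) ≤
            ∑ j ∈ Finset.range K, (a j + b j) * Real.exp (-t * j) :=
          Finset.single_le_sum (f := fun j => (a j + b j) * Real.exp (-t * j))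
            (fun j _ => mul_nonneg (add_nonneg (ha j) (hb j)) (Real.exp_pos _).le)
            (Finset.mem_range.2 hk)
        linarith
      have := mul_le_mul_of_nonneg_right hterm (Real.exp_pos (t * k)).le
      rwa [mul_assoc, ← Real.exp_add, neg_mul, neg_add_cancel, Real.exp_zero,
        mul_one] at this
  have hKa' : ∀ k, K ≤ k → _ := fun k hk => hKa k (le_trans (le_trans (le_max_left _ _) (le_max_left _ _)) hk)
  have hKb' : ∀ k, K ≤ k → _ := fun k hk => hKb k (le_trans (le_trans (le_max_right _ _) (le_max_left _ _)) hk)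
  have hA : ∀ k, a k ≤ C * Real.exp (t * k) :=
    key a ha (fun k => le_add_of_nonneg_right (hb k)) hKa'
  have hB : ∀ k, b k ≤ C * Real.exp (t * k) :=
    key b hb (fun k => le_add_of_nonneg_left (ha k)) hKb'
  -- bound on c
  have hCbound : ∀ k, c k ≤ (k + 1) * C ^ 2 * Real.exp (t * k) := by
    intro k
    have : c k ≤ ∑ n ∈ Finset.range (k + 1), C ^ 2 * Real.exp (t * k) := by
      apply Finset.sum_le_sum
      intro n hn
      have hn' : n ≤ k := Nat.lt_succ_iff.mp (Finset.mem_range.mp hn)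
      calc a n * b (k - n) ≤ (C * Real.exp (t * n)) * (C * Real.exp (t * (k - n : ℕ))) :=
            mul_le_mul (hA n) (hB (k - n)) (hb _) (by positivity)
      _ = C ^ 2 * Real.exp (t * n + t * (k - n : ℕ)) := by
            rw [Real.exp_add]; ring
      _ = C ^ 2 * Real.exp (t * k) := by
            congr 1
            rw [← mul_add]
            congr 1
            rw [← Nat.cast_add, Nat.add_sub_cancel' hn']
    rw [Finset.sum_const, Finset.card_range, nsmul_eq_mul] at this
    calc c k ≤ (k + 1 : ℕ) * (C ^ 2 * Real.exp (t * k)) := this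
    _ = (k + 1) * C ^ 2 * Real.exp (t * k) := by push_cast; ring
  -- the comparison sequence
  set D : ℕ → ℝ := fun k => Real.log ((k + 1) * C ^ 2) / k + t with hD
  have hDtend : Filter.Tendsto D Filter.atTop (nhds t) := by
    have h1 : Filter.Tendsto (fun k : ℕ => Real.log ((k:ℝ) + 1) / k)
        Filter.atTop (nhds 0) := by
      have base := Real.tendsto_pow_log_div_mul_add_atTop 1 (-1) 1 one_ne_zero
      have hcomp : Filter.Tendsto (fun k : ℕ => (k:ℝ) + 1) Filter.atTop Filter.atTop :=
        Filter.tendsto_atTop_add_const_right _ 1 tendsto_natCast_atTop_atTop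
      have := base.comp hcomp
      refine this.congr fun k => ?_
      simp [Function.comp]
    have h2 : Filter.Tendsto (fun k : ℕ => Real.log (C ^ 2) / k)
        Filter.atTop (nhds 0) := tendsto_const_div_atTop_nhds_zero_nat _
    have h3 : Filter.Tendsto (fun k : ℕ => Real.log ((k:ℝ) + 1) / k + Real.log (C ^ 2) / k + t)
        Filter.atTop (nhds (0 + 0 + t)) := Filter.Tendsto.add ((h1.add h2)) tendsto_const_nhds
    rw [zero_add, zero_add] at h3
    refine h3.congr' ?_
    filter_upwards [Filter.eventually_ge_atTop 1] with k hk
    have hk0 : (0:ℝ) < (k:ℝ) + 1 := by positivity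
    rw [hD]
    simp only
    rw [Real.log_mul hk0.ne' (by positivity), add_div]
  -- conclude
  have hle : Filter.limsup
      (fun k : ℕ => if c k = 0 then (⊥ : EReal) else ((Real.log (c k) / k : ℝ) : EReal))
      Filter.atTop ≤ Filter.limsup (fun k : ℕ => ((D k : ℝ) : EReal)) Filter.atTop := by
    apply Filter.limsup_le_limsup ?_ (by isBoundedDefault) (by isBoundedDefault)
    filter_upwards [Filter.eventually_ge_atTop 1] with k hk
    by_cases h0 : c k = 0
    · simp [h0]
    · rw [if_neg h0]
      have hk0 : (0:ℝ) < k := by exact_mod_cast hk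
      have hcpos : 0 < c k := lt_of_le_of_ne (hcnn k) (Ne.symm h0)
      have hlog : Real.log (c k) ≤ Real.log ((k + 1) * C ^ 2) + t * k := by
        calc Real.log (c k) ≤ Real.log ((k + 1) * C ^ 2 * Real.exp (t * k)) :=
              Real.log_le_log hcpos (hCbound k)
        _ = Real.log ((k + 1) * C ^ 2) + t * k := by
              rw [Real.log_mul (by positivity) (Real.exp_pos _).ne', Real.log_exp]
      have : Real.log (c k) / k ≤ D k := by
        rw [hD]
        simp only
        rw [div_le_iff₀ hk0] at *
        rw [add_mul, div_mul_cancel₀ _ hk0.ne']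
        linarith
      exact_mod_cast this
  have hDlim : Filter.limsup (fun k : ℕ => ((D k : ℝ) : EReal)) Filter.atTop = (t : EReal) := by
    apply Filter.Tendsto.limsup_eq
    exact (EReal.tendsto_coe.2 hDtend)
  calc expGrowthRate c ≤ _ := hle
  _ = (t : EReal) := hDlim
end

section
/- Let A be an N×N matrix with nonnegative entries and τ a nonnegative nonzero vector. Let S = supp τ and let H be the submatrix of A indexed by the set of vertices that have a directed path in A to some vertex of S (including S itself). Then limsup_k (1/k)·log( ∑_t (A^k τ)_t ) = log ρ(H). -/
noncomputable def specRad {n : Type*} [Fintype n] [DecidableEq n]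
    (A : Matrix n n ℝ) : ℝ :=
  sSup {r : ℝ | ∃ μ : ℂ, μ ∈ spectrum ℂ (A.map (Complex.ofReal : ℝ → ℂ)) ∧ r = ‖μ‖}

open Filter Matrix

attribute [local instance] Matrix.linftyOpNormedRing Matrix.linftyOpNormedAlgebra
  Matrix.linftyOpNormedAddCommGroup Matrix.linftyOpNormedSpace

lemma ofReal_norm_eq_coe_nnnorm {E : Type*} [SeminormedAddGroup E] (a : E) :
    ENNReal.ofReal ‖a‖ = (‖a‖₊ : ENNReal) := ENNReal.ofReal_coe_nnreal (p := ‖a‖₊)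

section helpers

variable {n : Type*} [Fintype n] [DecidableEq n]

lemma pow_entry_nonneg (B : Matrix n n ℝ) (hB : ∀ i j, 0 ≤ B i j) :
    ∀ m i j, 0 ≤ (B ^ m) i j := by
  intro m
  induction m with
  | zero => intro i j; simp [Matrix.one_apply]; split <;> norm_num
  | succ m ih =>
    intro i j
    rw [pow_succ, Matrix.mul_apply]
    exact Finset.sum_nonneg fun u _ => mul_nonneg (ih i u) (hB u j)

lemma pow_entry_mul_le (B : Matrix n n ℝ) (hB : ∀ i j, 0 ≤ B i j) (a b : ℕ) (i j k : n) :
    (B ^ a) i j * (B ^ b) j k ≤ (B ^ (a + b)) i k := by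
  rw [pow_add, Matrix.mul_apply]
  exact Finset.single_le_sum
    (fun u _ => mul_nonneg (pow_entry_nonneg B hB a i u) (pow_entry_nonneg B hB b u k))
    (Finset.mem_univ j)

lemma map_pow_ofReal (B : Matrix n n ℝ) (k : ℕ) :
    (B.map (Complex.ofReal)) ^ k = (B ^ k).map Complex.ofReal := by
  have : B.map Complex.ofReal = Complex.ofRealHom.mapMatrix B := rfl
  rw [this, ← map_pow]; rfl

lemma nnnorm_map_ofReal (B : Matrix n n ℝ) :
    ‖B.map (Complex.ofReal)‖₊ = ‖B‖₊ := by
  rw [Matrix.linfty_opNNNorm_def, Matrix.linfty_opNNNorm_def]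
  congr 1; ext i; congr 1; exact Finset.sum_congr rfl fun j _ => by simp [Matrix.map_apply]

variable [Nonempty n]

lemma specRad_nonneg (B : Matrix n n ℝ) : 0 ≤ specRad B := by
  obtain ⟨μ, hμ⟩ := spectrum.nonempty (B.map (Complex.ofReal : ℝ → ℂ))
  have hbdd : BddAbove {r : ℝ | ∃ μ : ℂ,
      μ ∈ spectrum ℂ (B.map (Complex.ofReal : ℝ → ℂ)) ∧ r = ‖μ‖} := by
    refine ⟨‖B.map (Complex.ofReal : ℝ → ℂ)‖, ?_⟩
    rintro r ⟨ν, hν, rfl⟩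
    simpa using spectrum.norm_le_norm_of_mem hν
  exact le_trans (norm_nonneg μ) (le_csSup hbdd ⟨μ, hμ, rfl⟩)

lemma spectralRadius_eq_ofReal_specRad (B : Matrix n n ℝ) :
    spectralRadius ℂ (B.map (Complex.ofReal : ℝ → ℂ)) = ENNReal.ofReal (specRad B) := by
  set a := B.map (Complex.ofReal : ℝ → ℂ)
  have hne : (spectrum ℂ a).Nonempty := spectrum.nonempty a
  have hbdd : BddAbove {r : ℝ | ∃ μ : ℂ, μ ∈ spectrum ℂ a ∧ r = ‖μ‖} := by
    refine ⟨‖a‖, ?_⟩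
    rintro r ⟨ν, hν, rfl⟩
    simpa using spectrum.norm_le_norm_of_mem hν
  have hfin : spectralRadius ℂ a ≠ ⊤ :=
    ne_top_of_le_ne_top ENNReal.coe_ne_top (spectrum.spectralRadius_le_nnnorm (𝕜 := ℂ) a)
  apply le_antisymm
  · refine iSup₂_le fun μ hμ => ?_
    rw [← ofReal_norm_eq_coe_nnnorm]
    exact ENNReal.ofReal_le_ofReal
      (le_csSup hbdd ⟨μ, hμ, rfl⟩)
  · rw [← ENNReal.ofReal_toReal hfin]
    apply ENNReal.ofReal_le_ofReal
    apply Real.sSup_le _ (ENNReal.toReal_nonneg)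
    rintro r ⟨ν, hν, rfl⟩
    have h1 : (‖ν‖₊ : ENNReal) ≤ spectralRadius ℂ a := le_iSup₂ (f := fun μ _ => (‖μ‖₊ : ENNReal)) ν hν
    have := ENNReal.toReal_mono hfin h1
    simpa using this

end helpers

section gelfand

variable {n : Type*} [Fintype n] [DecidableEq n] [Nonempty n]

lemma norm_pow_map_ofReal (B : Matrix n n ℝ) (k : ℕ) :
    ‖(B.map (Complex.ofReal : ℝ → ℂ)) ^ k‖ = ‖B ^ k‖ := by
  rw [map_pow_ofReal]
  exact congrArg NNReal.toReal (nnnorm_map_ofReal (B ^ k))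

lemma my_eventually_norm_pow_le (B : Matrix n n ℝ) {x : ℝ} (hx : specRad B < x) :
    ∀ᶠ k : ℕ in atTop, ‖B ^ k‖ ≤ x ^ k := by
  set a := B.map (Complex.ofReal : ℝ → ℂ) with ha
  have hx0 : 0 < x := lt_of_le_of_lt (specRad_nonneg B) hx
  have hlt : spectralRadius ℂ a < ENNReal.ofReal x := by
    rw [spectralRadius_eq_ofReal_specRad]
    exact (ENNReal.ofReal_lt_ofReal_iff hx0).2 hx
  have hev := (spectrum.pow_nnnorm_pow_one_div_tendsto_nhds_spectralRadius a).eventually_lt_const hlt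
  filter_upwards [hev, eventually_ge_atTop 1] with k hk hk1
  have hk0 : (k : ℝ) ≠ 0 := Nat.cast_ne_zero.2 (by omega)
  have h2 : ((‖a ^ k‖₊ : ENNReal) ^ (1 / (k:ℝ))) ^ (k : ℝ) ≤ (ENNReal.ofReal x) ^ (k : ℝ) :=
    ENNReal.rpow_le_rpow hk.le (by positivity)
  rw [← ENNReal.rpow_mul, one_div_mul_cancel hk0, ENNReal.rpow_one] at h2
  rw [ENNReal.rpow_natCast] at h2
  rw [← ENNReal.ofReal_pow hx0.le, ← ofReal_norm_eq_coe_nnnorm] at h2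
  have := (ENNReal.ofReal_le_ofReal_iff (by positivity)).1 h2
  rwa [norm_pow_map_ofReal] at this

lemma specRad_pow_le_norm (B : Matrix n n ℝ) {k : ℕ} (hk : 1 ≤ k) :
    specRad B ^ k ≤ ‖B ^ k‖ := by
  set a := B.map (Complex.ofReal : ℝ → ℂ) with ha
  obtain ⟨m, rfl⟩ : ∃ m, k = m + 1 := ⟨k - 1, by omega⟩
  have h1 := spectrum.spectralRadius_le_pow_nnnorm_pow_one_div ℂ a m
  rw [nnnorm_one, ENNReal.coe_one, ENNReal.one_rpow, mul_one,
    spectralRadius_eq_ofReal_specRad] at h1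
  have hk0 : ((m + 1 : ℕ) : ℝ) ≠ 0 := by positivity
  have h2 : (ENNReal.ofReal (specRad B)) ^ ((m+1 : ℕ) : ℝ)
      ≤ ((‖a ^ (m+1)‖₊ : ENNReal) ^ (1 / ((m+1 : ℕ):ℝ))) ^ ((m+1 : ℕ) : ℝ) := by
    push_cast at h1 ⊢
    exact ENNReal.rpow_le_rpow h1 (by positivity)
  rw [← ENNReal.rpow_mul, one_div_mul_cancel (by push_cast at hk0 ⊢; exact hk0),
    ENNReal.rpow_one, ENNReal.rpow_natCast, ← ENNReal.ofReal_pow (specRad_nonneg B),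
    ← ofReal_norm_eq_coe_nnnorm] at h2
  have := (ENNReal.ofReal_le_ofReal_iff (norm_nonneg _)).1 h2
  rwa [norm_pow_map_ofReal] at this

end gelfand

section corelemma

variable {n : Type*} [Fintype n] [DecidableEq n] [Nonempty n]

lemma norm_le_entries_sum (M : Matrix n n ℝ) (hM : ∀ i j, 0 ≤ M i j) :
    ‖M‖ ≤ ∑ i, ∑ j, M i j := by
  have h1 : ‖M‖₊ ≤ ∑ i, ∑ j, ‖M i j‖₊ := by
    rw [Matrix.linfty_opNNNorm_def]
    refine Finset.sup_le fun i _ => ?_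
    exact Finset.single_le_sum (f := fun i => ∑ j : n, ‖M i j‖₊)
      (fun i _ => zero_le) (Finset.mem_univ i)
  calc ‖M‖ ≤ ((∑ i, ∑ j, ‖M i j‖₊ : NNReal) : ℝ) := h1
    _ = ∑ i, ∑ j, M i j := by
        push_cast
        exact Finset.sum_congr rfl fun i _ => Finset.sum_congr rfl fun j _ => by
          simp [Real.norm_of_nonneg (hM i j)]

lemma entries_sum_le_norm (M : Matrix n n ℝ) (hM : ∀ i j, 0 ≤ M i j) :
    ∑ i, ∑ j, M i j ≤ (Fintype.card n : ℝ) * ‖M‖ := by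
  have h1 : ∀ i, ∑ j, M i j ≤ ‖M‖ := by
    intro i
    have h2 : (∑ j, ‖M i j‖₊ : NNReal) ≤ ‖M‖₊ := by
      rw [Matrix.linfty_opNNNorm_def]
      exact Finset.le_sup (f := fun i => ∑ j : n, ‖M i j‖₊) (Finset.mem_univ i)
    calc ∑ j, M i j = ((∑ j, ‖M i j‖₊ : NNReal) : ℝ) := by
          push_cast
          exact Finset.sum_congr rfl fun j _ => by simp [Real.norm_of_nonneg (hM i j)]
      _ ≤ ‖M‖ := h2
  calc ∑ i, ∑ j, M i j ≤ ∑ _i : n, ‖M‖ := Finset.sum_le_sum fun i _ => h1 i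
    _ = (Fintype.card n : ℝ) * ‖M‖ := by simp [Finset.sum_const, nsmul_eq_mul, Finset.card_univ]


lemma tendsto_toEReal_atBot : Filter.Tendsto (fun x : ℝ => (x : EReal)) atBot (nhds (⊥ : EReal)) := by
  have h : Filter.Tendsto (fun x : ℝ => (x : EReal)) atBot (nhdsWithin (⊥ : EReal) {(⊥:EReal)}ᶜ) := by
    rw [EReal.nhdsWithin_bot]
    exact tendsto_map
  exact h.mono_right nhdsWithin_le_nhds

open scoped Classical in
lemma core_limsup (B : Matrix n n ℝ) (hB : ∀ i j, 0 ≤ B i j)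
    (σ : n → ℝ) (hσ : ∀ i, 0 ≤ σ i) (hσ0 : ∃ i, 0 < σ i)
    (hacc : ∀ v : n, ∃ s m, 0 < σ s ∧ 0 < (B ^ m) v s) :
    Filter.limsup (fun k : ℕ => if (∑ t, (B ^ k).mulVec σ t) = 0 then (⊥ : EReal)
        else ((Real.log (∑ t, (B ^ k).mulVec σ t) / k : ℝ) : EReal)) Filter.atTop
      = if specRad B = 0 then (⊥ : EReal) else ((Real.log (specRad B) : ℝ) : EReal) := by
  set ρ := specRad B with hρdef
  have hρ0 : 0 ≤ ρ := specRad_nonneg B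
  set g : ℕ → ℝ := fun k => ∑ t, (B ^ k).mulVec σ t with hgdef
  set h : ℕ → EReal := fun k => if g k = 0 then (⊥ : EReal)
      else ((Real.log (g k) / k : ℝ) : EReal) with hhdef
  show Filter.limsup h Filter.atTop = _
  set F : ℕ → ℝ := fun k => ∑ i, ∑ j, (B ^ k) i j with hFdef
  have hpow := pow_entry_nonneg B hB
  have hgsum : ∀ k, g k = ∑ t, ∑ u, (B ^ k) t u * σ u := by
    intro k
    exact Finset.sum_congr rfl fun t _ => by
      simp [Matrix.mulVec, dotProduct]
  have hg0 : ∀ k, 0 ≤ g k := by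
    intro k
    rw [hgsum]
    exact Finset.sum_nonneg fun t _ => Finset.sum_nonneg fun u _ =>
      mul_nonneg (hpow k t u) (hσ u)
  have hge : ∀ (K : ℕ) (i s : n), (B ^ K) i s * σ s ≤ g K := by
    intro K i s
    rw [hgsum]
    calc (B ^ K) i s * σ s ≤ ∑ u, (B ^ K) i u * σ u :=
          Finset.single_le_sum (f := fun u => (B ^ K) i u * σ u)
            (fun u _ => mul_nonneg (hpow K i u) (hσ u)) (Finset.mem_univ s)
      _ ≤ ∑ t, ∑ u, (B ^ K) t u * σ u :=
          Finset.single_le_sum (f := fun t => ∑ u, (B ^ K) t u * σ u)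
            (fun t _ => Finset.sum_nonneg fun u _ => mul_nonneg (hpow K t u) (hσ u))
            (Finset.mem_univ i)
  have hF0 : ∀ k, 0 ≤ F k := fun k =>
    Finset.sum_nonneg fun i _ => Finset.sum_nonneg fun j _ => hpow k i j
  have hFn : ∀ k, ‖B ^ k‖ ≤ F k := fun k => norm_le_entries_sum _ (hpow k)
  have hnF : ∀ k, F k ≤ (Fintype.card n : ℝ) * ‖B ^ k‖ := fun k =>
    entries_sum_le_norm _ (hpow k)
  have hcard1 : (1 : ℝ) ≤ (Fintype.card n : ℝ) := by
    exact_mod_cast Nat.one_le_iff_ne_zero.2 (Fintype.card_ne_zero)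
  have hcard0 : (0 : ℝ) < (Fintype.card n : ℝ) := by linarith
  -- access constants
  choose sfun mfun hs hm using hacc
  set M : ℕ := Finset.univ.sup mfun with hMdef
  set c : ℝ := Finset.univ.inf' Finset.univ_nonempty
      (fun v => (B ^ mfun v) v (sfun v) * σ (sfun v)) with hcdef
  have hc : 0 < c := by
    rw [hcdef, Finset.lt_inf'_iff]
    exact fun v _ => mul_pos (hm v) (hs v)
  have hkey : ∀ (k : ℕ) (i j : n), c * (B ^ k) i j ≤ g (k + mfun j) := by
    intro k i j
    have h1 : c ≤ (B ^ mfun j) j (sfun j) * σ (sfun j) :=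
      Finset.inf'_le _ (Finset.mem_univ j)
    calc c * (B ^ k) i j ≤ ((B ^ mfun j) j (sfun j) * σ (sfun j)) * (B ^ k) i j :=
          mul_le_mul_of_nonneg_right h1 (hpow k i j)
      _ = ((B ^ k) i j * (B ^ mfun j) j (sfun j)) * σ (sfun j) := by ring
      _ ≤ (B ^ (k + mfun j)) i (sfun j) * σ (sfun j) :=
          mul_le_mul_of_nonneg_right (pow_entry_mul_le B hB k (mfun j) i j (sfun j))
            (hσ (sfun j))
      _ ≤ g (k + mfun j) := hge _ _ _
  have hFsum : ∀ k, c * F k ≤ ((Fintype.card n : ℝ))^2 * ∑ m ∈ Finset.range (M+1), g (k+m) := by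
    intro k
    have h1 : ∀ i j : n, c * (B ^ k) i j ≤ ∑ m ∈ Finset.range (M+1), g (k+m) := by
      intro i j
      refine (hkey k i j).trans ?_
      refine Finset.single_le_sum (f := fun m => g (k+m)) (fun m _ => hg0 _) ?_
      exact Finset.mem_range.2 (Nat.lt_succ_of_le (Finset.le_sup (Finset.mem_univ j)))
    calc c * F k = ∑ i, ∑ j, c * (B ^ k) i j := by
          rw [hFdef]; simp [Finset.mul_sum]
      _ ≤ ∑ _i : n, ∑ _j : n, ∑ m ∈ Finset.range (M+1), g (k+m) :=
          Finset.sum_le_sum fun i _ => Finset.sum_le_sum fun j _ => h1 i j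
      _ = ((Fintype.card n : ℝ))^2 * ∑ m ∈ Finset.range (M+1), g (k+m) := by
          simp [Finset.sum_const, Finset.card_univ, nsmul_eq_mul]; ring
  -- upper bound
  have hub : ∀ x : ℝ, ρ < x → Filter.limsup h Filter.atTop ≤ ((Real.log x : ℝ) : EReal) := by
    intro x hx
    have hx0 : 0 < x := lt_of_le_of_lt hρ0 hx
    set Cσ : ℝ := ∑ j, σ j with hCσdef
    have hCσ : 0 < Cσ := by
      obtain ⟨i0, hi0⟩ := hσ0
      exact lt_of_lt_of_le hi0 (Finset.single_le_sum (fun i _ => hσ i) (Finset.mem_univ i0))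
    set C : ℝ := Cσ * (Fintype.card n : ℝ) with hCdef
    have hC : 0 < C := mul_pos hCσ hcard0
    have hgC : ∀ k, g k ≤ C * ‖B ^ k‖ := by
      intro k
      have h1 : g k ≤ Cσ * F k := by
        rw [hgsum, hFdef, Finset.mul_sum]
        refine Finset.sum_le_sum fun t _ => ?_
        rw [Finset.mul_sum]
        refine Finset.sum_le_sum fun u _ => ?_
        calc (B ^ k) t u * σ u ≤ (B ^ k) t u * Cσ :=
              mul_le_mul_of_nonneg_left
                (Finset.single_le_sum (fun i _ => hσ i) (Finset.mem_univ u)) (hpow k t u)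
          _ = Cσ * (B ^ k) t u := by ring
      calc g k ≤ Cσ * F k := h1
        _ ≤ Cσ * ((Fintype.card n : ℝ) * ‖B ^ k‖) :=
            mul_le_mul_of_nonneg_left (hnF k) hCσ.le
        _ = C * ‖B ^ k‖ := by rw [hCdef]; ring
    have hev : ∀ᶠ k : ℕ in atTop, h k ≤ ((Real.log C / k + Real.log x : ℝ) : EReal) := by
      filter_upwards [my_eventually_norm_pow_le B hx, eventually_ge_atTop 1] with k hnorm hk1
      by_cases hgk : g k = 0
      · simp [hhdef, hgk]
      · have hgkpos : 0 < g k := lt_of_le_of_ne (hg0 k) (Ne.symm hgk)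
        have hbound : g k ≤ C * x ^ k := (hgC k).trans
          (mul_le_mul_of_nonneg_left hnorm hC.le)
        have hlog : Real.log (g k) ≤ Real.log C + k * Real.log x := by
          calc Real.log (g k) ≤ Real.log (C * x ^ k) := Real.log_le_log hgkpos hbound
            _ = Real.log C + k * Real.log x := by
                rw [Real.log_mul hC.ne' (by positivity), Real.log_pow]
        have hkpos : (0 : ℝ) < k := by exact_mod_cast hk1
        have hdiv : Real.log (g k) / k ≤ Real.log C / k + Real.log x := by
          have h3 : Real.log (g k) / k ≤ (Real.log C + k * Real.log x) / k := by gcongr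
          rwa [add_div, mul_div_cancel_left₀ _ hkpos.ne'] at h3
        simp only [hhdef, if_neg hgk]
        exact EReal.coe_le_coe_iff.2 hdiv
    have htendu : Filter.Tendsto (fun k : ℕ => ((Real.log C / k + Real.log x : ℝ) : EReal))
        atTop (nhds ((Real.log x : ℝ) : EReal)) := by
      refine EReal.tendsto_coe.2 ?_
      have h4 := (tendsto_const_div_atTop_nhds_zero_nat (Real.log C)).add_const (Real.log x)
      simpa using h4
    calc Filter.limsup h Filter.atTop
        ≤ Filter.limsup (fun k : ℕ => ((Real.log C / k + Real.log x : ℝ) : EReal))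
            Filter.atTop := Filter.limsup_le_limsup hev
      _ = ((Real.log x : ℝ) : EReal) := htendu.limsup_eq
  by_cases hρz : ρ = 0
  · rw [if_pos hρz]
    refine le_bot_iff.1 ?_
    have htend : Filter.Tendsto (fun x : ℝ => ((Real.log x : ℝ) : EReal))
        (nhdsWithin 0 (Set.Ioi 0)) (nhds (⊥ : EReal)) :=
      tendsto_toEReal_atBot.comp Real.tendsto_log_nhdsGT_zero
    refine ge_of_tendsto htend ?_
    filter_upwards [eventually_mem_nhdsWithin] with x hx
    exact hub x (hρz ▸ hx.out)
  · rw [if_neg hρz]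
    have hρpos : 0 < ρ := lt_of_le_of_ne hρ0 (Ne.symm hρz)
    -- lower-bound machinery
    set c1 : ℝ := c / (((Fintype.card n : ℝ))^2 * (M+1)) with hc1def
    have hc1 : 0 < c1 := div_pos hc (by positivity)
    have hwin : ∀ k : ℕ, 1 ≤ k → ∃ m, m ≤ M ∧ c1 * ρ^k ≤ g (k+m) := by
      intro k hk
      by_contra hcon
      push_neg at hcon
      have hsum : ∑ m ∈ Finset.range (M+1), g (k+m) < ((M:ℝ)+1) * (c1 * ρ^k) := by
        have h6 := Finset.sum_lt_sum_of_nonempty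
          (Finset.nonempty_range_iff.2 (Nat.succ_ne_zero M))
          (f := fun m => g (k+m)) (g := fun _ => c1 * ρ^k)
          (fun m hm => hcon m (Nat.lt_succ_iff.1 (Finset.mem_range.1 hm)))
        calc ∑ m ∈ Finset.range (M+1), g (k+m)
            < ∑ _m ∈ Finset.range (M+1), (c1 * ρ^k) := h6
          _ = ((M:ℝ)+1) * (c1 * ρ^k) := by
              rw [Finset.sum_const, Finset.card_range, nsmul_eq_mul]; push_cast; ring
      have h2 : c * ρ^k ≤ c * F k :=
        mul_le_mul_of_nonneg_left ((specRad_pow_le_norm B hk).trans (hFn k)) hc.le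
      have h3 := h2.trans (hFsum k)
      have h4 : ((Fintype.card n:ℝ))^2 * ∑ m ∈ Finset.range (M+1), g (k+m)
          < ((Fintype.card n:ℝ))^2 * (((M:ℝ)+1) * (c1 * ρ^k)) :=
        mul_lt_mul_of_pos_left hsum (by positivity)
      have h5 : ((Fintype.card n:ℝ))^2 * (((M:ℝ)+1) * (c1 * ρ^k)) = c * ρ^k := by
        rw [hc1def]
        field_simp
      linarith
    set d : ℝ := c1 / max 1 (ρ^M) with hddef
    have hmax : (0:ℝ) < max 1 (ρ^M) := lt_of_lt_of_le one_pos (le_max_left _ _)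
    have hd : 0 < d := div_pos hc1 hmax
    have hfreq : ∀ k0 : ℕ, ∃ j, k0 ≤ j ∧ d * ρ^j ≤ g j := by
      intro k0
      obtain ⟨m, hmM, hgm⟩ := hwin (max k0 1) (le_max_right _ _)
      refine ⟨max k0 1 + m, le_trans (le_max_left _ _) (Nat.le_add_right _ _), ?_⟩
      have h1 : ρ ^ m ≤ max 1 (ρ^M) := by
        rcases le_total ρ 1 with hρ1 | hρ1
        · exact le_trans (pow_le_one₀ hρ0 hρ1) (le_max_left _ _)
        · exact le_trans (pow_le_pow_right₀ hρ1 hmM) (le_max_right _ _)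
      have h7 : d * ρ ^ (max k0 1 + m) ≤ c1 * ρ ^ (max k0 1) := by
        rw [pow_add, hddef]
        calc c1 / max 1 (ρ^M) * (ρ ^ max k0 1 * ρ ^ m)
            ≤ c1 / max 1 (ρ^M) * (ρ ^ max k0 1 * max 1 (ρ^M)) := by
              refine mul_le_mul_of_nonneg_left
                (mul_le_mul_of_nonneg_left h1 (pow_nonneg hρ0 _)) ?_
              positivity
          _ = c1 * ρ ^ max k0 1 := by field_simp
      exact h7.trans hgm
    have hlb : ((Real.log ρ : ℝ) : EReal) ≤ Filter.limsup h Filter.atTop := by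
      have htendε : Filter.Tendsto (fun ε : ℝ => ((Real.log ρ - ε : ℝ) : EReal))
          (nhdsWithin 0 (Set.Ioi 0)) (nhds ((Real.log ρ : ℝ) : EReal)) := by
        refine EReal.tendsto_coe.2 ?_
        have h8 : Filter.Tendsto (fun ε : ℝ => Real.log ρ - ε) (nhdsWithin 0 (Set.Ioi 0))
            (nhds (Real.log ρ - 0)) :=
          tendsto_const_nhds.sub (tendsto_id.mono_left nhdsWithin_le_nhds)
        simpa using h8
      refine le_of_tendsto htendε ?_
      filter_upwards [eventually_mem_nhdsWithin] with ε hε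
      have hεpos : (0:ℝ) < ε := hε
      refine le_limsup_of_frequently_le' ?_
      have hev2 : ∀ᶠ j : ℕ in atTop, -ε < Real.log d / j :=
        (tendsto_const_div_atTop_nhds_zero_nat (Real.log d)).eventually_const_lt
          (by linarith)
      rw [frequently_atTop]
      intro a
      obtain ⟨a0, ha0⟩ := eventually_atTop.1 (hev2.and (eventually_ge_atTop 1))
      obtain ⟨j, hj, hgj⟩ := hfreq (max a a0)
      obtain ⟨hj1, hj2⟩ := ha0 j (le_trans (le_max_right _ _) hj)
      refine ⟨j, le_trans (le_max_left _ _) hj, ?_⟩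
      have hgjpos : 0 < g j := lt_of_lt_of_le (mul_pos hd (pow_pos hρpos j)) hgj
      have hne : g j ≠ 0 := hgjpos.ne'
      have hjpos : (0:ℝ) < j := by exact_mod_cast hj2
      have hlog : Real.log ρ - ε ≤ Real.log (g j) / j := by
        have h1 : Real.log (d * ρ^j) ≤ Real.log (g j) :=
          Real.log_le_log (mul_pos hd (pow_pos hρpos j)) hgj
        rw [Real.log_mul hd.ne' (pow_pos hρpos j).ne', Real.log_pow] at h1
        have h3 : (Real.log d + (j:ℝ) * Real.log ρ) / j ≤ Real.log (g j) / j := by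
          gcongr
        rw [add_div, mul_div_cancel_left₀ _ hjpos.ne'] at h3
        linarith
      simp only [hhdef, if_neg hne]
      exact EReal.coe_le_coe_iff.2 hlog
    refine le_antisymm ?_ hlb
    have htend : Filter.Tendsto (fun x : ℝ => ((Real.log x : ℝ) : EReal))
        (nhdsWithin ρ (Set.Ioi ρ)) (nhds ((Real.log ρ : ℝ) : EReal)) :=
      EReal.tendsto_coe.2 ((Real.continuousAt_log hρpos.ne').continuousWithinAt.tendsto)
    refine ge_of_tendsto htend ?_
    filter_upwards [eventually_mem_nhdsWithin] with x hx
    exact hub x hx.out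

end corelemma

open scoped Classical in
theorem stmt_11 {N : ℕ} (A : Matrix (Fin N) (Fin N) ℝ)
    (hA : ∀ i j, 0 ≤ A i j)
    (τ : Fin N → ℝ) (hτ : ∀ i, 0 ≤ τ i) (hτ0 : τ ≠ 0) :
    let H : Matrix {v : Fin N // ∃ s, 0 < τ s ∧ ∃ m : ℕ, 0 < (A ^ m) v s}
        {v : Fin N // ∃ s, 0 < τ s ∧ ∃ m : ℕ, 0 < (A ^ m) v s} ℝ :=
      Matrix.of fun i j => A i.1 j.1
    Filter.limsup
        (fun k : ℕ =>
          if (∑ t, (A ^ k).mulVec τ t) = 0 then (⊥ : EReal)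
          else ((Real.log (∑ t, (A ^ k).mulVec τ t) / k : ℝ) : EReal))
        Filter.atTop
      = if specRad H = 0 then (⊥ : EReal) else ((Real.log (specRad H) : ℝ) : EReal) := by
  intro H
  have hpow := pow_entry_nonneg A hA
  obtain ⟨s0, hs0⟩ : ∃ s, 0 < τ s := by
    by_contra hcon; push_neg at hcon
    exact hτ0 (funext fun i => le_antisymm (hcon i) (hτ i))
  have hPs : ∀ v : Fin N, 0 < τ v → (∃ s, 0 < τ s ∧ ∃ m : ℕ, 0 < (A ^ m) v s) := fun v hv =>
    ⟨v, hv, 0, by simp [Matrix.one_apply_eq]⟩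
  haveI hne : Nonempty {v : Fin N // ∃ s, 0 < τ s ∧ ∃ m : ℕ, 0 < (A ^ m) v s} :=
    ⟨⟨s0, hPs s0 hs0⟩⟩
  have hclose : ∀ u w : Fin N, (∃ s, 0 < τ s ∧ ∃ m : ℕ, 0 < (A ^ m) w s) → ∀ a : ℕ,
      0 < (A ^ a) u w → (∃ s, 0 < τ s ∧ ∃ m : ℕ, 0 < (A ^ m) u s) := by
    rintro u w ⟨s, hτs, m', hm'⟩ a ha
    exact ⟨s, hτs, a + m',
      lt_of_lt_of_le (mul_pos ha hm') (pow_entry_mul_le A hA a m' u w s)⟩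
  have hsub : ∀ f : Fin N → ℝ,
      (∀ v, ¬ (∃ s, 0 < τ s ∧ ∃ m : ℕ, 0 < (A ^ m) v s) → f v = 0) →
      ∑ v : {v : Fin N // ∃ s, 0 < τ s ∧ ∃ m : ℕ, 0 < (A ^ m) v s}, f v.1 = ∑ v, f v := by
    intro f hf
    rw [← Finset.sum_filter_of_ne
      (p := fun v => ∃ s, 0 < τ s ∧ ∃ m : ℕ, 0 < (A ^ m) v s)
      (fun x _ hx => by_contra fun hPx => hx (hf x hPx))]
    exact (Finset.sum_subtype _ (by simp) f).symm
  have hHA : ∀ (m : ℕ) (v w : {v : Fin N // ∃ s, 0 < τ s ∧ ∃ m : ℕ, 0 < (A ^ m) v s}),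
      (H ^ m) v w = (A ^ m) v.1 w.1 := by
    intro m
    induction m with
    | zero => intro v w; simp [Matrix.one_apply, Subtype.ext_iff]
    | succ m ih =>
      intro v w
      rw [pow_succ, pow_succ, Matrix.mul_apply, Matrix.mul_apply]
      have hterm : ∀ u : {v : Fin N // ∃ s, 0 < τ s ∧ ∃ m : ℕ, 0 < (A ^ m) v s},
          (H ^ m) v u * H u w = (A ^ m) v.1 u.1 * A u.1 w.1 := fun u => by
        rw [ih v u]; rfl
      rw [Finset.sum_congr rfl (fun u _ => hterm u)]
      exact hsub (fun u => (A ^ m) v.1 u * A u w.1) (fun u hu => by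
        show (A ^ m) v.1 u * A u w.1 = 0
        rcases eq_or_lt_of_le (hA u w.1) with h0 | hpos
        · rw [← h0, mul_zero]
        · exact absurd (hclose u w.1 w.2 1 (by simpa using hpos)) hu)
  have hgeq : ∀ k : ℕ, (∑ t, (A ^ k).mulVec τ t)
      = ∑ t : {v : Fin N // ∃ s, 0 < τ s ∧ ∃ m : ℕ, 0 < (A ^ m) v s},
          (H ^ k).mulVec (fun v => τ v.1) t := by
    intro k
    have hAsum : ∑ t, (A ^ k).mulVec τ t = ∑ t, ∑ u, (A ^ k) t u * τ u :=
      Finset.sum_congr rfl fun t _ => by simp [Matrix.mulVec, dotProduct]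
    have hHsum : ∑ t : {v : Fin N // ∃ s, 0 < τ s ∧ ∃ m : ℕ, 0 < (A ^ m) v s},
        (H ^ k).mulVec (fun v => τ v.1) t
        = ∑ t : {v : Fin N // ∃ s, 0 < τ s ∧ ∃ m : ℕ, 0 < (A ^ m) v s},
            ∑ u : {v : Fin N // ∃ s, 0 < τ s ∧ ∃ m : ℕ, 0 < (A ^ m) v s},
            (A ^ k) t.1 u.1 * τ u.1 := by
      refine Finset.sum_congr rfl fun t _ => ?_
      simp only [Matrix.mulVec, dotProduct]
      exact Finset.sum_congr rfl fun u _ => by rw [hHA k t u]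
    rw [hAsum, hHsum]
    have step1 : ∀ t : Fin N, ∑ u, (A ^ k) t u * τ u
        = ∑ u : {v : Fin N // ∃ s, 0 < τ s ∧ ∃ m : ℕ, 0 < (A ^ m) v s},
            (A ^ k) t u.1 * τ u.1 := by
      intro t
      refine (hsub (fun u => (A ^ k) t u * τ u) ?_).symm
      intro u hu
      have hτu : τ u = 0 := by
        by_contra h0
        exact hu (hPs u (lt_of_le_of_ne (hτ u) (Ne.symm h0)))
      show (A ^ k) t u * τ u = 0
      rw [hτu, mul_zero]
    have step2 : ∀ u : {v : Fin N // ∃ s, 0 < τ s ∧ ∃ m : ℕ, 0 < (A ^ m) v s},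
        ∑ t, (A ^ k) t u.1 * τ u.1
        = ∑ t : {v : Fin N // ∃ s, 0 < τ s ∧ ∃ m : ℕ, 0 < (A ^ m) v s},
            (A ^ k) t.1 u.1 * τ u.1 := by
      intro u
      refine (hsub (fun t => (A ^ k) t u.1 * τ u.1) ?_).symm
      intro t ht
      show (A ^ k) t u.1 * τ u.1 = 0
      rcases eq_or_lt_of_le (hpow k t u.1) with h0 | hpos
      · rw [← h0, zero_mul]
      · exact absurd (hclose t u.1 u.2 k hpos) ht
    rw [Finset.sum_congr rfl (fun t _ => step1 t)]
    calc ∑ t, ∑ u : {v : Fin N // ∃ s, 0 < τ s ∧ ∃ m : ℕ, 0 < (A ^ m) v s},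
          (A ^ k) t u.1 * τ u.1
        = ∑ u : {v : Fin N // ∃ s, 0 < τ s ∧ ∃ m : ℕ, 0 < (A ^ m) v s},
            ∑ t, (A ^ k) t u.1 * τ u.1 := Finset.sum_comm
      _ = ∑ u : {v : Fin N // ∃ s, 0 < τ s ∧ ∃ m : ℕ, 0 < (A ^ m) v s},
            ∑ t : {v : Fin N // ∃ s, 0 < τ s ∧ ∃ m : ℕ, 0 < (A ^ m) v s},
            (A ^ k) t.1 u.1 * τ u.1 := Finset.sum_congr rfl fun u _ => step2 u
      _ = _ := Finset.sum_comm
  have hacc : ∀ v : {v : Fin N // ∃ s, 0 < τ s ∧ ∃ m : ℕ, 0 < (A ^ m) v s},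
      ∃ s m, 0 < (fun u : {v : Fin N // ∃ s, 0 < τ s ∧ ∃ m : ℕ, 0 < (A ^ m) v s} => τ u.1) s
        ∧ 0 < (H ^ m) v s := by
    rintro ⟨v, hv⟩
    obtain ⟨s, hτs, m, hms⟩ := hv
    refine ⟨⟨s, hPs s hτs⟩, m, hτs, ?_⟩
    rw [hHA m]
    exact hms
  have hmain := core_limsup H (fun i j => hA i.1 j.1)
    (fun v => τ v.1) (fun v => hτ v.1) ⟨⟨s0, hPs s0 hs0⟩, hs0⟩ hacc
  rw [← hmain]
  congr 1
  funext k
  rw [hgeq k]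
end

section
/- Let A be an N×N matrix with nonnegative real entries, β > 0, and τ a nonnegative vector with unit ℓ¹-norm. Then ∑_{k=0}^∞ e^{-kβ} ∑_t (A^k τ)_t < ∞ if and only if limsup_k (1/k)·log( ∑_t (A^k τ)_t ) < β. -/
open Filter Real Topology

theorem stmt_12 {N : ℕ} (A : Matrix (Fin N) (Fin N) ℝ)
    (hA : ∀ i j, 0 ≤ A i j)
    (β : ℝ) (hβ : 0 < β)
    (τ : Fin N → ℝ) (hτ : ∀ i, 0 ≤ τ i) (hτ1 : ∑ i, τ i = 1) :
    (Summable fun k : ℕ => Real.exp (-(k : ℝ) * β) * ∑ t, (A ^ k).mulVec τ t) ↔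
      Filter.limsup
          (fun k : ℕ =>
            if (∑ t, (A ^ k).mulVec τ t) = 0 then (⊥ : EReal)
            else ((Real.log (∑ t, (A ^ k).mulVec τ t) / k : ℝ) : EReal))
          Filter.atTop
        < (β : EReal) := by
  classical
  set x : ℝ := Real.exp (-β) with hx
  have hx0 : 0 < x := Real.exp_pos _
  set M : Matrix (Fin N) (Fin N) ℝ := x • A with hM
  -- nonnegativity of powers of M
  have hMnn : ∀ k, ∀ i j, (0:ℝ) ≤ (M ^ k) i j := by
    intro k
    induction k with
    | zero =>
      intro i j
      by_cases hij : i = j <;> simp [Matrix.one_apply, hij]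
    | succ n ih =>
      intro i j
      rw [pow_succ, Matrix.mul_apply]
      refine Finset.sum_nonneg fun s _ => mul_nonneg (ih i s) ?_
      have : M s j = x * A s j := rfl
      rw [this]
      exact mul_nonneg hx0.le (hA s j)
  set v : ℕ → Fin N → ℝ := fun k => (M ^ k).mulVec τ with hv
  set b : ℕ → ℝ := fun k => ∑ t, v k t with hb
  have hv_apply : ∀ k t, v k t = ∑ s, (M ^ k) t s * τ s := fun k t => rfl
  have hvnn : ∀ k t, 0 ≤ v k t := by
    intro k t
    rw [hv_apply]
    exact Finset.sum_nonneg fun s _ => mul_nonneg (hMnn k t s) (hτ s)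
  have hb_nonneg : ∀ k, 0 ≤ b k := fun k => Finset.sum_nonneg fun t _ => hvnn k t
  have hvb : ∀ k t, v k t ≤ b k := fun k t =>
    Finset.single_le_sum (fun s _ => hvnn k s) (Finset.mem_univ t)
  have hb0 : b 0 = 1 := by
    simp only [hb, hv, pow_zero, Matrix.one_mulVec]
    exact hτ1
  have hxk : ∀ k : ℕ, Real.exp (-(k : ℝ) * β) = x ^ k := by
    intro k
    rw [hx, ← Real.exp_nat_mul]
    congr 1
    ring
  have hkey : ∀ k : ℕ, Real.exp (-(k : ℝ) * β) * (∑ t, (A ^ k).mulVec τ t) = b k := by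
    intro k
    have h1 : (M ^ k : Matrix (Fin N) (Fin N) ℝ) = x ^ k • (A ^ k) := smul_pow x A k
    have h2 : b k = x ^ k * ∑ t, (A ^ k).mulVec τ t := by
      simp only [hb, hv, h1, Matrix.smul_mulVec, Pi.smul_apply, smul_eq_mul]
      rw [Finset.mul_sum]
    rw [h2, hxk]
  have haeq : ∀ k : ℕ, (∑ t, (A ^ k).mulVec τ t) = Real.exp ((k : ℝ) * β) * b k := by
    intro k
    rw [← hkey k, ← mul_assoc, ← Real.exp_add]
    have h : (k : ℝ) * β + -(k : ℝ) * β = 0 := by ring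
    rw [h, Real.exp_zero, one_mul]
  have hann : ∀ k : ℕ, 0 ≤ ∑ t, (A ^ k).mulVec τ t := by
    intro k
    rw [haeq k]
    exact mul_nonneg (Real.exp_pos _).le (hb_nonneg k)
  constructor
  · -- hard direction
    intro hS
    have hSb : Summable b := (summable_congr hkey).mp hS
    have hv_sum : ∀ t, Summable fun k => v k t := fun t =>
      Summable.of_nonneg_of_le (fun k => hvnn k t) (fun k => hvb k t) hSb
    set u : Fin N → ℝ := fun t => ∑' k, v k t with hu
    have hunn : ∀ t, 0 ≤ u t := fun t => tsum_nonneg fun k => hvnn k t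
    have hvu : ∀ k t, v k t ≤ u t := fun k t =>
      Summable.le_tsum (hv_sum t) k fun j _ => hvnn j t
    have hv_shift : ∀ m k t, v (k + m) t = ∑ s, (M ^ m) t s * v k s := by
      intro m k t
      have h1 : (M ^ (k + m) : Matrix (Fin N) (Fin N) ℝ) = M ^ m * M ^ k := by
        rw [add_comm, pow_add]
      have h2 : v (k + m) = (M ^ m).mulVec ((M ^ k).mulVec τ) := by
        rw [hv]
        simp only [h1, Matrix.mulVec_mulVec]
      rw [h2]
      rfl
    have hT : ∀ m t, ((M ^ m).mulVec u) t = ∑' k, v (k + m) t := by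
      intro m t
      have h0 : ((M ^ m).mulVec u) t = ∑ s, (M ^ m) t s * u s := rfl
      rw [h0]
      calc ∑ s, (M ^ m) t s * u s
          = ∑ s, ∑' k, (M ^ m) t s * v k s :=
            Finset.sum_congr rfl fun s _ => (tsum_mul_left).symm
        _ = ∑' k, ∑ s, (M ^ m) t s * v k s :=
            (Summable.tsum_finsetSum fun s _ => (hv_sum s).mul_left _).symm
        _ = ∑' k, v (k + m) t := tsum_congr fun k => (hv_shift m k t).symm
    set T : ℕ → ℝ := fun m => ∑ t, ((M ^ m).mulVec u) t with hTdef
    have hTsum : ∀ m, T m = ∑' k, b (k + m) := by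
      intro m
      calc T m = ∑ t, ∑' k, v (k + m) t := Finset.sum_congr rfl fun t _ => hT m t
        _ = ∑' k, ∑ t, v (k + m) t :=
            (Summable.tsum_finsetSum fun t _ => (summable_nat_add_iff m).mpr (hv_sum t)).symm
        _ = ∑' k, b (k + m) := rfl
    have hT0 : Tendsto T atTop (𝓝 0) :=
      (tendsto_sum_nat_add b).congr fun m => (hTsum m).symm
    have hτu : ∀ t, τ t ≤ u t := by
      intro t
      have h0 : v 0 t = τ t := by
        rw [hv_apply]
        simp [Matrix.one_apply]
      rw [← h0]
      exact hvu 0 t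
    have hPne : ∃ t, 0 < u t := by
      by_contra h
      push_neg at h
      have hz : ∀ t, τ t = 0 := fun t => le_antisymm ((hτu t).trans (h t)) (hτ t)
      rw [Finset.sum_congr rfl fun t _ => hz t] at hτ1
      simp at hτ1
    set P : Finset (Fin N) := Finset.univ.filter (fun t => 0 < u t) with hP
    have hPne' : P.Nonempty := by
      obtain ⟨t, ht⟩ := hPne
      exact ⟨t, by simp [hP, ht]⟩
    set c : ℝ := P.inf' hPne' u with hc
    have hc0 : 0 < c := by
      rw [hc, Finset.lt_inf'_iff]
      intro t ht
      exact (Finset.mem_filter.mp ht).2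
    have hcu : ∀ t, 0 < u t → c ≤ u t := fun t ht =>
      Finset.inf'_le u (by simp [hP, ht])
    have hclaimA : ∀ n t, v n t ≤ b n / c * u t := by
      intro n t
      by_cases ht : 0 < u t
      · calc v n t ≤ b n := hvb n t
          _ = b n / c * c := by field_simp
          _ ≤ b n / c * u t :=
              mul_le_mul_of_nonneg_left (hcu t ht) (div_nonneg (hb_nonneg n) hc0.le)
      · have ht0 : u t = 0 := le_antisymm (not_lt.mp ht) (hunn t)
        have h1 := hvu n t
        rw [ht0] at h1
        rw [ht0, mul_zero]
        exact h1
    have hclaimB : ∀ m n, b (n + m) ≤ b n / c * T m := by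
      intro m n
      calc b (n + m) = ∑ t, v (n + m) t := rfl
        _ = ∑ t, ∑ s, (M ^ m) t s * v n s := Finset.sum_congr rfl fun t _ => hv_shift m n t
        _ ≤ ∑ t, ∑ s, (M ^ m) t s * (b n / c * u s) := by
            refine Finset.sum_le_sum fun t _ => Finset.sum_le_sum fun s _ => ?_
            exact mul_le_mul_of_nonneg_left (hclaimA n s) (hMnn m t s)
        _ = b n / c * ∑ t, ∑ s, (M ^ m) t s * u s := by
            rw [Finset.mul_sum]
            refine Finset.sum_congr rfl fun t _ => ?_
            rw [Finset.mul_sum]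
            exact Finset.sum_congr rfl fun s _ => by ring
        _ = b n / c * T m := rfl
    obtain ⟨m₀, hm₀T, hm₀pos⟩ :=
      ((hT0.eventually_lt_const (half_pos hc0)).and (eventually_gt_atTop 0)).exists
    have hhalf : ∀ n, b (n + m₀) ≤ b n / 2 := by
      intro n
      calc b (n + m₀) ≤ b n / c * T m₀ := hclaimB m₀ n
        _ ≤ b n / c * (c / 2) :=
            mul_le_mul_of_nonneg_left hm₀T.le (div_nonneg (hb_nonneg n) hc0.le)
        _ = b n / 2 := by field_simp
    have hgeo : ∀ q r, b (q * m₀ + r) ≤ b r / 2 ^ q := by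
      intro q
      induction q with
      | zero => intro r; simp
      | succ p ih =>
        intro r
        have h1 : (p + 1) * m₀ + r = (p * m₀ + r) + m₀ := by ring
        rw [h1]
        calc b ((p * m₀ + r) + m₀) ≤ b (p * m₀ + r) / 2 := hhalf _
          _ ≤ (b r / 2 ^ p) / 2 := by
              have := ih r
              linarith
          _ = b r / 2 ^ (p + 1) := by
              rw [pow_succ]
              ring
    set B : ℝ := ∑ r ∈ Finset.range m₀, b r with hBdef
    have hBr : ∀ r < m₀, b r ≤ B := fun r hr =>
      Finset.single_le_sum (fun i _ => hb_nonneg i) (Finset.mem_range.mpr hr)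
    have hB1 : 1 ≤ B := by
      rw [← hb0]
      exact hBr 0 hm₀pos
    have hbn : ∀ n, b n ≤ B / 2 ^ (n / m₀) := by
      intro n
      have h1 : n = (n / m₀) * m₀ + n % m₀ := by
        rw [Nat.mul_comm (n / m₀) m₀, Nat.div_add_mod]
      calc b n = b ((n / m₀) * m₀ + n % m₀) := by rw [← h1]
        _ ≤ b (n % m₀) / 2 ^ (n / m₀) := hgeo _ _
        _ ≤ B / 2 ^ (n / m₀) := by
            gcongr
            exact hBr _ (Nat.mod_lt n hm₀pos)
    set ε : ℝ := Real.log 2 / m₀ with hε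
    have hm₀R : (0:ℝ) < m₀ := by exact_mod_cast hm₀pos
    have hε0 : 0 < ε := div_pos (Real.log_pos one_lt_two) hm₀R
    set C : ℝ := Real.log B + Real.log 2 with hC
    have hC0 : 0 ≤ C := add_nonneg (Real.log_nonneg hB1) (Real.log_nonneg one_le_two)
    have hlog : ∀ n : ℕ, 0 < (∑ t, (A ^ n).mulVec τ t) →
        Real.log (∑ t, (A ^ n).mulVec τ t) ≤ n * (β - ε) + C := by
      intro n hn
      have hbpos : 0 < b n := by
        rw [← hkey n]
        exact mul_pos (Real.exp_pos _) hn
      have h1 : Real.log (∑ t, (A ^ n).mulVec τ t) = (n : ℝ) * β + Real.log (b n) := by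
        rw [haeq n, Real.log_mul (Real.exp_ne_zero _) (ne_of_gt hbpos), Real.log_exp]
      have hq4 : (n : ℝ) < ((n / m₀ : ℕ) : ℝ) * m₀ + m₀ := by
        have h4 : n < (n / m₀) * m₀ + m₀ := by
          rw [Nat.mul_comm (n / m₀) m₀]
          conv_lhs => rw [← Nat.div_add_mod n m₀]
          exact Nat.add_lt_add_left (Nat.mod_lt n hm₀pos) _
        exact_mod_cast h4
      have h2 : Real.log (b n) ≤ Real.log B - ((n / m₀ : ℕ) : ℝ) * Real.log 2 := by
        have hle := Real.log_le_log hbpos (hbn n)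
        rw [Real.log_div (by linarith : B ≠ 0) (by positivity : (2:ℝ) ^ (n / m₀) ≠ 0),
          Real.log_pow] at hle
        exact hle
      have h3 : Real.log (b n) ≤ Real.log B + Real.log 2 - (n : ℝ) * ε := by
        have hl2 : 0 < Real.log 2 := Real.log_pos one_lt_two
        have hqlb : (n : ℝ) / m₀ - 1 ≤ ((n / m₀ : ℕ) : ℝ) := by
          rw [sub_le_iff_le_add, div_le_iff₀ hm₀R]
          nlinarith
        have : (n : ℝ) * ε = (n : ℝ) / m₀ * Real.log 2 := by
          rw [hε]
          ring
        nlinarith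
      rw [h1]
      rw [hC]
      linarith
    obtain ⟨n₁, hn₁⟩ := exists_nat_ge (2 * C / ε)
    have hev : ∀ᶠ n : ℕ in atTop,
        (if (∑ t, (A ^ n).mulVec τ t) = 0 then (⊥ : EReal)
          else ((Real.log (∑ t, (A ^ n).mulVec τ t) / n : ℝ) : EReal))
          ≤ ((β - ε / 2 : ℝ) : EReal) := by
      filter_upwards [eventually_ge_atTop (max n₁ 1)] with n hn
      by_cases h0 : (∑ t, (A ^ n).mulVec τ t) = 0
      · simp [h0]
      · have hpos : 0 < ∑ t, (A ^ n).mulVec τ t := lt_of_le_of_ne (hann n) (Ne.symm h0)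
        rw [if_neg h0, EReal.coe_le_coe_iff]
        have hn1 : 1 ≤ n := le_trans (le_max_right _ _) hn
        have hnR : (0:ℝ) < n := by exact_mod_cast hn1
        have hnn₁ : (n₁ : ℝ) ≤ (n : ℝ) := by exact_mod_cast le_trans (le_max_left _ _) hn
        have hCn : C ≤ (n : ℝ) * (ε / 2) := by
          have h5 : 2 * C / ε ≤ (n : ℝ) := le_trans hn₁ hnn₁
          rw [div_le_iff₀ hε0] at h5
          linarith
        rw [div_le_iff₀ hnR]
        have := hlog n hpos
        nlinarith
    have hls := Filter.limsup_le_of_le (h := hev)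
    refine lt_of_le_of_lt hls ?_
    have : (β - ε / 2 : ℝ) < β := by linarith
    exact_mod_cast this
  · -- easy direction (root test)
    intro h
    obtain ⟨γ, hγ1, hγ2⟩ := EReal.exists_between_coe_real h
    have hγβ : γ < β := by exact_mod_cast hγ2
    have hev : ∀ᶠ k : ℕ in atTop,
        (if (∑ t, (A ^ k).mulVec τ t) = 0 then (⊥ : EReal)
          else ((Real.log (∑ t, (A ^ k).mulVec τ t) / k : ℝ) : EReal)) < (γ : EReal) :=
      Filter.eventually_lt_of_limsup_lt hγ1
    obtain ⟨k₀', hk₀'⟩ := (hev.and (eventually_ge_atTop 1)).exists_forall_of_atTop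
    set r : ℝ := Real.exp (γ - β) with hr
    have hr0 : 0 ≤ r := (Real.exp_pos _).le
    have hr1 : r < 1 := by
      rw [hr, Real.exp_lt_one_iff]
      linarith
    have hbound : ∀ k, k₀' ≤ k → b k ≤ r ^ k := by
      intro k hk
      obtain ⟨hlt, hk1⟩ := hk₀' k hk
      by_cases h0 : (∑ t, (A ^ k).mulVec τ t) = 0
      · rw [← hkey k, h0, mul_zero]
        positivity
      · have hpos : 0 < ∑ t, (A ^ k).mulVec τ t := lt_of_le_of_ne (hann k) (Ne.symm h0)
        rw [if_neg h0, EReal.coe_lt_coe_iff] at hlt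
        have hkR : (0:ℝ) < k := by exact_mod_cast hk1
        rw [div_lt_iff₀ hkR] at hlt
        have ha_lt : (∑ t, (A ^ k).mulVec τ t) < Real.exp ((k : ℝ) * γ) := by
          rw [← Real.exp_log hpos]
          exact Real.exp_lt_exp.mpr (by linarith)
        have heq : Real.exp (-(k : ℝ) * β) * Real.exp ((k : ℝ) * γ) = r ^ k := by
          rw [← Real.exp_add, hr, ← Real.exp_nat_mul]
          congr 1
          ring
        calc b k = Real.exp (-(k : ℝ) * β) * (∑ t, (A ^ k).mulVec τ t) := (hkey k).symm
          _ ≤ Real.exp (-(k : ℝ) * β) * Real.exp ((k : ℝ) * γ) :=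
              mul_le_mul_of_nonneg_left ha_lt.le (Real.exp_pos _).le
          _ = r ^ k := heq
    rw [summable_congr hkey]
    rw [← summable_nat_add_iff k₀']
    refine Summable.of_nonneg_of_le (fun n => hb_nonneg _)
      (fun n => hbound (n + k₀') (Nat.le_add_left _ _)) ?_
    exact (summable_nat_add_iff k₀').mpr (summable_geometric_of_lt_one hr0 hr1)
end

section
/- Let A₁, …, A_k be pairwise commuting N×N matrices with nonnegative entries and suppose the maximum λ of the spectral radii ρ(Aᵢ) satisfies λ ≥ 1 and is attained at i = 1. Then there is a nonzero nonnegative vector w with A₁ w = λ w and Aᵢ w = λᵢ w where 0 ≤ λᵢ ≤ λ for all i; in particular the set F = { i : λᵢ < λ } is a proper subset of {1, …, k} (it does not contain 1). -/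
namespace PFaux

variable {N : ℕ}

/-- The set whose sup is `specRad`. -/
def specSet (T : Matrix (Fin N) (Fin N) ℝ) : Set ℝ :=
  {r : ℝ | ∃ μ : ℂ, μ ∈ spectrum ℂ (T.map (Complex.ofReal : ℝ → ℂ)) ∧ r = ‖μ‖}

lemma mulVec_apply' (T : Matrix (Fin N) (Fin N) ℝ) (x : Fin N → ℝ) (r : Fin N) :
    T.mulVec x r = ∑ j, T r j * x j := rfl

lemma mulVec_nonneg {T : Matrix (Fin N) (Fin N) ℝ} (hT : ∀ r s, 0 ≤ T r s)
    {x : Fin N → ℝ} (hx : ∀ r, 0 ≤ x r) : ∀ r, 0 ≤ T.mulVec x r := by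
  intro r
  rw [mulVec_apply']
  exact Finset.sum_nonneg fun j _ => mul_nonneg (hT r j) (hx j)

lemma mulVec_mono {T : Matrix (Fin N) (Fin N) ℝ} (hT : ∀ r s, 0 ≤ T r s)
    {x y : Fin N → ℝ} (hxy : ∀ r, x r ≤ y r) : ∀ r, T.mulVec x r ≤ T.mulVec y r := by
  intro r
  rw [mulVec_apply', mulVec_apply']
  exact Finset.sum_le_sum fun j _ => mul_le_mul_of_nonneg_left (hxy j) (hT r j)

lemma map_pow_comm (T : Matrix (Fin N) (Fin N) ℝ) (n : ℕ) :
    (T.map (Complex.ofReal : ℝ → ℂ)) ^ n = (T ^ n).map (Complex.ofReal : ℝ → ℂ) := by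
  have h : ∀ M : Matrix (Fin N) (Fin N) ℝ,
      M.map (Complex.ofReal : ℝ → ℂ) = (Complex.ofRealHom.mapMatrix : Matrix (Fin N) (Fin N) ℝ →+* _) M := fun _ => rfl
  rw [h, h, ← map_pow]

lemma spec_iff (T : Matrix (Fin N) (Fin N) ℝ) (μ : ℂ) :
    μ ∈ spectrum ℂ (T.map (Complex.ofReal : ℝ → ℂ)) ↔
      ∃ ψ : Fin N → ℂ, ψ ≠ 0 ∧ (T.map (Complex.ofReal : ℝ → ℂ)).mulVec ψ = μ • ψ := by
  set B := T.map (Complex.ofReal : ℝ → ℂ)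
  rw [spectrum.mem_iff, Algebra.algebraMap_eq_smul_one]
  rw [Matrix.isUnit_iff_isUnit_det, isUnit_iff_ne_zero, not_not, ← Matrix.exists_mulVec_eq_zero_iff]
  constructor
  · rintro ⟨v, hv, h⟩
    refine ⟨v, hv, ?_⟩
    have := h
    rw [Matrix.sub_mulVec, Matrix.smul_mulVec, Matrix.one_mulVec, sub_eq_zero] at this
    exact this.symm
  · rintro ⟨ψ, hψ, h⟩
    refine ⟨ψ, hψ, ?_⟩
    rw [Matrix.sub_mulVec, Matrix.smul_mulVec, Matrix.one_mulVec, sub_eq_zero, h]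

lemma abs_le_of_eigen {T : Matrix (Fin N) (Fin N) ℝ} {μ : ℂ} {ψ : Fin N → ℂ}
    (hψ : ψ ≠ 0) (h : (T.map (Complex.ofReal : ℝ → ℂ)).mulVec ψ = μ • ψ) :
    ‖μ‖ ≤ ∑ r, ∑ c, |T r c| := by
  classical
  -- pick coordinate with maximal |ψ i|
  have hne : (Finset.univ : Finset (Fin N)).Nonempty := by
    rcases Function.ne_iff.mp hψ with ⟨i, -⟩
    exact ⟨i, Finset.mem_univ i⟩
  obtain ⟨i, -, hi⟩ := Finset.exists_max_image Finset.univ (fun j => ‖ψ j‖) hne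
  have hipos : 0 < ‖ψ i‖ := by
    rcases Function.ne_iff.mp hψ with ⟨j, hj⟩
    have : 0 < ‖ψ j‖ := by
      simpa [norm_pos_iff] using hj
    exact lt_of_lt_of_le this (hi j (Finset.mem_univ j))
  have key : ‖μ‖ * ‖ψ i‖ ≤ (∑ r, ∑ c, |T r c|) * ‖ψ i‖ := by
    have h1 : ‖μ * ψ i‖ = ‖(T.map Complex.ofReal).mulVec ψ i‖ := by
      rw [h]; simp [Pi.smul_apply]
    rw [norm_mul] at h1
    have h2 : ‖(T.map Complex.ofReal).mulVec ψ i‖ ≤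
        ∑ j, |T i j| * ‖ψ j‖ := by
      have : (T.map Complex.ofReal).mulVec ψ i = ∑ j, (T.map Complex.ofReal) i j * ψ j := rfl
      rw [this]
      refine le_trans (norm_sum_le _ _) ?_
      apply le_of_eq
      refine Finset.sum_congr rfl fun j _ => ?_
      simp [Matrix.map_apply, norm_mul, Complex.norm_real]
    have h3 : ∑ j, |T i j| * ‖ψ j‖ ≤ (∑ j, |T i j|) * ‖ψ i‖ := by
      rw [Finset.sum_mul]
      exact Finset.sum_le_sum fun j _ =>
        mul_le_mul_of_nonneg_left (hi j (Finset.mem_univ j)) (abs_nonneg _)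
    have h4 : (∑ j, |T i j|) ≤ ∑ r, ∑ c, |T r c| := by
      exact Finset.single_le_sum (f := fun r => ∑ c, |T r c|)
        (fun r _ => Finset.sum_nonneg fun c _ => abs_nonneg _) (Finset.mem_univ i)
    calc ‖μ‖ * ‖ψ i‖ = ‖(T.map Complex.ofReal).mulVec ψ i‖ := h1
      _ ≤ ∑ j, |T i j| * ‖ψ j‖ := h2
      _ ≤ (∑ j, |T i j|) * ‖ψ i‖ := h3
      _ ≤ (∑ r, ∑ c, |T r c|) * ‖ψ i‖ := by
          exact mul_le_mul_of_nonneg_right h4 (norm_nonneg _)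
  exact le_of_mul_le_mul_right key hipos

lemma specSet_bddAbove (T : Matrix (Fin N) (Fin N) ℝ) : BddAbove (specSet T) := by
  refine ⟨∑ r, ∑ c, |T r c|, ?_⟩
  rintro r ⟨μ, hμ, rfl⟩
  obtain ⟨ψ, hψ, h⟩ := (spec_iff T μ).mp hμ
  exact abs_le_of_eigen hψ h

lemma le_specRad_of_mem {T : Matrix (Fin N) (Fin N) ℝ} {r : ℝ} (h : r ∈ specSet T) :
    r ≤ specRad T :=
  le_csSup (specSet_bddAbove T) h

lemma eigen_abs_le {T : Matrix (Fin N) (Fin N) ℝ} {c : ℝ} {w : Fin N → ℝ}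
    (hw : w ≠ 0) (h : T.mulVec w = c • w) : |c| ≤ specRad T := by
  have hmem : (c : ℂ) ∈ spectrum ℂ (T.map (Complex.ofReal : ℝ → ℂ)) := by
    rw [spec_iff]
    refine ⟨fun j => (w j : ℂ), ?_, ?_⟩
    · intro h0
      apply hw
      funext j
      have := congrFun h0 j
      simpa using this
    · funext i
      have : (T.map Complex.ofReal).mulVec (fun j => (w j : ℂ)) i
          = ∑ j, ((T i j : ℂ)) * (w j : ℂ) := rfl
      rw [this]
      have hw' := congrFun h i
      rw [mulVec_apply'] at hw'
      push_cast
      rw [show ∑ j, (T i j : ℂ) * (w j : ℂ) = ((∑ j, T i j * w j : ℝ) : ℂ) by push_cast; ring_nf]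
      rw [hw']
      simp [Pi.smul_apply]
  have : |c| ∈ specSet T := ⟨(c : ℂ), hmem, by simp [Complex.norm_real]⟩
  exact le_specRad_of_mem this

lemma pow_entries_nonneg {T : Matrix (Fin N) (Fin N) ℝ} (hT : ∀ r s, 0 ≤ T r s) (n : ℕ) :
    ∀ r s, 0 ≤ (T ^ n) r s := by
  induction n with
  | zero => intro r s; simp [Matrix.one_apply]; split <;> norm_num
  | succ n ih =>
    intro r s
    rw [pow_succ, Matrix.mul_apply]
    exact Finset.sum_nonneg fun j _ => mul_nonneg (ih r j) (hT j s)

lemma pow_mulVec_le {T : Matrix (Fin N) (Fin N) ℝ} (hT : ∀ r s, 0 ≤ T r s)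
    {y : Fin N → ℝ} (hy : ∀ r, 0 ≤ y r) {β : ℝ} (hβ : 0 ≤ β)
    (hsub : ∀ r, T.mulVec y r ≤ β * y r) (n : ℕ) :
    ∀ r, (T ^ n).mulVec y r ≤ β ^ n * y r := by
  induction n with
  | zero => intro r; simp [Matrix.one_mulVec]
  | succ n ih =>
    intro r
    have h1 : (T ^ (n+1)).mulVec y = T.mulVec ((T ^ n).mulVec y) := by
      rw [Matrix.mulVec_mulVec, ← pow_succ']
    rw [h1]
    have h2 : T.mulVec ((T ^ n).mulVec y) r ≤ T.mulVec (fun j => β ^ n * y j) r :=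
      mulVec_mono hT ih r
    refine le_trans h2 ?_
    have h3 : T.mulVec (fun j => β ^ n * y j) r = β ^ n * T.mulVec y r := by
      rw [mulVec_apply', mulVec_apply', Finset.mul_sum]
      exact Finset.sum_congr rfl fun j _ => by ring
    rw [h3, pow_succ]
    calc β ^ n * T.mulVec y r ≤ β ^ n * (β * y r) :=
          mul_le_mul_of_nonneg_left (hsub r) (pow_nonneg hβ n)
      _ = β ^ n * β * y r := by ring

lemma spec_bound {T : Matrix (Fin N) (Fin N) ℝ} (hT : ∀ r s, 0 ≤ T r s)
    {y : Fin N → ℝ} (hy : ∀ r, 0 < y r) {β : ℝ} (hβ : 0 < β)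
    (hsub : ∀ r, T.mulVec y r ≤ β * y r) : specRad T ≤ β := by
  rcases Set.eq_empty_or_nonempty (specSet T) with hE | hE
  · show sSup (specSet T) ≤ β
    rw [hE, Real.sSup_empty]; exact hβ.le
  refine Real.sSup_le ?_ hβ.le
  rintro r ⟨μ, hμ, rfl⟩
  obtain ⟨ψ, hψ, h⟩ := (spec_iff T μ).mp hμ
  by_contra hcon
  push_neg at hcon
  -- M bound: |ψ j| ≤ M * y j
  classical
  have hne : (Finset.univ : Finset (Fin N)).Nonempty := by
    rcases Function.ne_iff.mp hψ with ⟨i, -⟩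
    exact ⟨i, Finset.mem_univ i⟩
  obtain ⟨i0, -, hi0⟩ := Finset.exists_max_image Finset.univ
    (fun j => ‖ψ j‖ / y j) hne
  set M := ‖ψ i0‖ / y i0 with hM
  have hMb : ∀ j, ‖ψ j‖ ≤ M * y j := by
    intro j
    have := hi0 j (Finset.mem_univ j)
    calc ‖ψ j‖ = (‖ψ j‖ / y j) * y j := by
          rw [div_mul_eq_mul_div, mul_div_assoc, div_self (hy j).ne', mul_one]
      _ ≤ M * y j := mul_le_mul_of_nonneg_right this (hy j).le
  -- eigen powers
  have hpow : ∀ n : ℕ, ((T.map Complex.ofReal) ^ n).mulVec ψ = μ ^ n • ψ := by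
    intro n
    induction n with
    | zero => simp [Matrix.one_mulVec]
    | succ n ih =>
      rw [pow_succ', ← Matrix.mulVec_mulVec, ih]
      rw [Matrix.mulVec_smul, h, smul_smul, pow_succ', mul_comm]
  -- choose coordinate with ψ i ≠ 0
  rcases Function.ne_iff.mp hψ with ⟨i, hψi⟩
  have hψipos : 0 < ‖ψ i‖ := by simpa [norm_pos_iff] using hψi
  have hkey : ∀ n : ℕ, ‖μ‖ ^ n * ‖ψ i‖ ≤ M * (β ^ n * y i) := by
    intro n
    have h1 : ‖μ ^ n * ψ i‖ = ‖((T.map Complex.ofReal) ^ n).mulVec ψ i‖ := by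
      rw [hpow n]; simp [Pi.smul_apply]
    rw [norm_mul, norm_pow] at h1
    have h2 : ‖((T.map Complex.ofReal) ^ n).mulVec ψ i‖ ≤
        ∑ j, (T ^ n) i j * ‖ψ j‖ := by
      rw [map_pow_comm]
      have : ((T ^ n).map Complex.ofReal).mulVec ψ i = ∑ j, ((T ^ n) i j : ℂ) * ψ j := rfl
      rw [this]
      refine le_trans (norm_sum_le _ _) ?_
      apply le_of_eq
      refine Finset.sum_congr rfl fun j _ => ?_
      rw [norm_mul, Complex.norm_real, Real.norm_eq_abs, abs_of_nonneg (pow_entries_nonneg hT n i j)]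
    have h3 : ∑ j, (T ^ n) i j * ‖ψ j‖ ≤ ∑ j, (T ^ n) i j * (M * y j) :=
      Finset.sum_le_sum fun j _ =>
        mul_le_mul_of_nonneg_left (hMb j) (pow_entries_nonneg hT n i j)
    have h4 : ∑ j, (T ^ n) i j * (M * y j) = M * (T ^ n).mulVec y i := by
      rw [mulVec_apply', Finset.mul_sum]
      exact Finset.sum_congr rfl fun j _ => by ring
    have h5 : (T ^ n).mulVec y i ≤ β ^ n * y i := pow_mulVec_le hT (fun r => (hy r).le) hβ.le hsub n i
    have hM0 : 0 ≤ M := div_nonneg (norm_nonneg _) (hy i0).le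
    calc ‖μ‖ ^ n * ‖ψ i‖ = ‖((T.map Complex.ofReal) ^ n).mulVec ψ i‖ := h1
      _ ≤ ∑ j, (T ^ n) i j * ‖ψ j‖ := h2
      _ ≤ ∑ j, (T ^ n) i j * (M * y j) := h3
      _ = M * (T ^ n).mulVec y i := h4
      _ ≤ M * (β ^ n * y i) := mul_le_mul_of_nonneg_left h5 hM0
  -- contradiction: (|μ|/β)^n bounded but |μ|/β > 1
  have hub : ∀ n : ℕ, (‖μ‖ / β) ^ n ≤ M * y i / ‖ψ i‖ := by
    intro n
    have h6 : ‖μ‖ ^ n ≤ (M * y i / ‖ψ i‖) * β ^ n := by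
      rw [div_mul_eq_mul_div, le_div_iff₀ hψipos]
      calc ‖μ‖ ^ n * ‖ψ i‖ ≤ M * (β ^ n * y i) := hkey n
        _ = M * y i * β ^ n := by ring
    rw [div_pow, div_le_iff₀ (pow_pos hβ n)]
    exact h6
  have hgt : 1 < ‖μ‖ / β := by
    rw [lt_div_iff₀ hβ]; simpa using hcon
  obtain ⟨n, hn⟩ := pow_unbounded_of_one_lt (M * y i / ‖ψ i‖) hgt
  exact absurd (hub n) (not_le.mpr hn)

lemma phi_pow_le {T : Matrix (Fin N) (Fin N) ℝ} (hT : ∀ r s, 0 ≤ T r s)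
    {u : Fin N → ℝ} (hu : ∀ r, 0 ≤ u r) (n : ℕ) :
    ∑ r, (T ^ n).mulVec u r ≤ (∑ r, ∑ c, T r c) ^ n * ∑ r, u r := by
  set R := ∑ r, ∑ c, T r c with hR
  have hR0 : 0 ≤ R := Finset.sum_nonneg fun r _ => Finset.sum_nonneg fun c _ => hT r c
  induction n with
  | zero => simp [Matrix.one_mulVec]
  | succ n ih =>
    have h1 : (T ^ (n+1)).mulVec u = T.mulVec ((T ^ n).mulVec u) := by
      rw [Matrix.mulVec_mulVec, ← pow_succ']
    rw [h1]
    have hTn : ∀ r, 0 ≤ (T ^ n).mulVec u r := mulVec_nonneg (pow_entries_nonneg hT n) hu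
    have h2 : ∑ r, T.mulVec ((T ^ n).mulVec u) r ≤ R * ∑ r, (T ^ n).mulVec u r := by
      have expand : ∑ r, T.mulVec ((T ^ n).mulVec u) r
          = ∑ r, ∑ c, T r c * (T ^ n).mulVec u c := by
        exact Finset.sum_congr rfl fun r _ => mulVec_apply' T _ r
      rw [expand, hR, Finset.sum_mul]
      refine Finset.sum_le_sum fun r _ => ?_
      rw [Finset.sum_mul]
      refine Finset.sum_le_sum fun c _ => ?_
      refine mul_le_mul_of_nonneg_left ?_ (hT r c)
      exact Finset.single_le_sum (fun j _ => hTn j) (Finset.mem_univ c)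
    calc ∑ r, T.mulVec ((T ^ n).mulVec u) r ≤ R * ∑ r, (T ^ n).mulVec u r := h2
      _ ≤ R * (R ^ n * ∑ r, u r) := mul_le_mul_of_nonneg_left ih hR0
      _ = R ^ (n+1) * ∑ r, u r := by ring

lemma neumann {T : Matrix (Fin N) (Fin N) ℝ} (hT : ∀ r s, 0 ≤ T r s)
    {K : Set (Fin N → ℝ)} (hKclosed : IsClosed K)
    (hKnn : ∀ x ∈ K, ∀ r, 0 ≤ x r)
    (hKadd : ∀ x ∈ K, ∀ y ∈ K, x + y ∈ K)
    (hKsmul : ∀ x ∈ K, ∀ c : ℝ, 0 ≤ c → c • x ∈ K)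
    (hKT : ∀ x ∈ K, T.mulVec x ∈ K)
    {u : Fin N → ℝ} (hu : u ∈ K) {s : ℝ}
    (hs : (∑ r, ∑ c, T r c) < s) (hs0 : 0 < s) :
    ∃ v ∈ K, (∀ r, u r / s ≤ v r) ∧ T.mulVec v = s • v - u := by
  classical
  set R := ∑ r, ∑ c, T r c with hR
  have hR0 : 0 ≤ R := Finset.sum_nonneg fun r _ => Finset.sum_nonneg fun c _ => hT r c
  have hu0 : ∀ r, 0 ≤ u r := hKnn u hu
  set f : ℕ → (Fin N → ℝ) := fun n => (1 / s ^ (n+1)) • (T ^ n).mulVec u with hf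
  have hf0 : ∀ n r, 0 ≤ f n r := by
    intro n r
    exact mul_nonneg (by positivity) (mulVec_nonneg (pow_entries_nonneg hT n) hu0 r)
  have hfK : ∀ n, f n ∈ K := by
    intro n
    refine hKsmul _ ?_ _ (by positivity)
    induction n with
    | zero => simpa using hu
    | succ n ih =>
      have : (T ^ (n+1)).mulVec u = T.mulVec ((T ^ n).mulVec u) := by
        rw [Matrix.mulVec_mulVec, ← pow_succ']
      rw [this]
      exact hKT _ ih
  -- coordinatewise summability
  have hbound : ∀ n r, f n r ≤ ((∑ j, u j) / s) * (R / s) ^ n := by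
    intro n r
    have h1 : (T ^ n).mulVec u r ≤ R ^ n * ∑ j, u j := by
      refine le_trans (Finset.single_le_sum
        (fun j _ => mulVec_nonneg (pow_entries_nonneg hT n) hu0 j) (Finset.mem_univ r)) ?_
      exact phi_pow_le hT hu0 n
    have : f n r = (T ^ n).mulVec u r / s ^ (n+1) := by
      simp [hf, Pi.smul_apply, smul_eq_mul]; ring
    rw [this]
    rw [div_le_iff₀ (by positivity)]
    calc (T ^ n).mulVec u r ≤ R ^ n * ∑ j, u j := h1
      _ = ((∑ j, u j) / s) * (R / s) ^ n * s ^ (n+1) := by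
          field_simp
          rw [div_pow, pow_succ, ← mul_assoc, mul_assoc _ _ (s ^ n), div_mul_cancel₀ _ (pow_ne_zero n hs0.ne')]
          ring
  have hsummable : ∀ r, Summable (fun n => f n r) := by
    intro r
    refine Summable.of_nonneg_of_le (fun n => hf0 n r) (fun n => hbound n r) ?_
    refine Summable.mul_left _ ?_
    apply summable_geometric_of_lt_one (by positivity)
    rw [div_lt_one hs0]; exact hs
  set v : Fin N → ℝ := fun r => ∑' n, f n r with hv
  have hsum : Summable f := Pi.summable.mpr hsummable
  -- v ∈ K via partial sums
  have hvK : v ∈ K := by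
    have h0K : (0 : Fin N → ℝ) ∈ K := by
      have := hKsmul u hu 0 le_rfl
      simpa using this
    have hpart : ∀ m : ℕ, (∑ n ∈ Finset.range m, f n) ∈ K := by
      intro m
      induction m with
      | zero => simpa using h0K
      | succ m ih =>
        rw [Finset.sum_range_succ]
        exact hKadd _ ih _ (hfK m)
    have htend : Filter.Tendsto (fun m => ∑ n ∈ Finset.range m, f n) Filter.atTop (nhds v) := by
      rw [tendsto_pi_nhds]
      intro r
      have h1 : Filter.Tendsto (fun m => ∑ n ∈ Finset.range m, f n r) Filter.atTop (nhds (v r)) :=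
        (hsummable r).hasSum.tendsto_sum_nat
      convert h1 using 2
      simp
    exact hKclosed.mem_of_tendsto htend (Filter.Eventually.of_forall hpart)
  have hvlb : ∀ r, u r / s ≤ v r := by
    intro r
    have h0 : f 0 r = u r / s := by
      simp [hf, Pi.smul_apply, smul_eq_mul]
      ring
    rw [← h0]
    exact Summable.le_tsum (hsummable r) 0 (fun n _ => hf0 n r)
  refine ⟨v, hvK, hvlb, ?_⟩
  funext r
  -- T v r = Σ' n, T (f n) r, and then shift
  have hswap : T.mulVec v r = ∑' n, T.mulVec (f n) r := by
    rw [mulVec_apply']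
    have : ∀ j, v j = ∑' n, f n j := fun j => rfl
    calc ∑ j, T r j * v j = ∑ j, ∑' n, T r j * f n j := by
          refine Finset.sum_congr rfl fun j _ => ?_
          rw [this j, ← tsum_mul_left]
      _ = ∑' n, ∑ j, T r j * f n j := by
          rw [← Summable.tsum_finsetSum]
          intro j _
          exact (hsummable j).mul_left _
      _ = ∑' n, T.mulVec (f n) r := by
          refine tsum_congr fun n => ?_
          rw [mulVec_apply']
  have hTf : ∀ n, T.mulVec (f n) = s • f (n+1) := by
    intro n
    funext j
    have h1 : T.mulVec (f n) = (1 / s ^ (n+1)) • T.mulVec ((T ^ n).mulVec u) := by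
      rw [hf]
      simp only []
      rw [Matrix.mulVec_smul]
    have h2 : T.mulVec ((T ^ n).mulVec u) = (T ^ (n+1)).mulVec u := by
      rw [Matrix.mulVec_mulVec, ← pow_succ']
    rw [h1, h2]
    simp [hf, Pi.smul_apply, smul_eq_mul]
    field_simp
    ring
  rw [hswap]
  have hshift : ∑' n, T.mulVec (f n) r = s * ∑' n, f (n+1) r := by
    rw [← tsum_mul_left]
    refine tsum_congr fun n => ?_
    rw [hTf n]
    simp [Pi.smul_apply, smul_eq_mul]
  rw [hshift]
  have hzero : ∑' n, f n r = f 0 r + ∑' n, f (n+1) r := Summable.tsum_eq_zero_add (hsummable r)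
  have h0 : f 0 r = u r / s := by
    simp [hf, Pi.smul_apply, smul_eq_mul]
    ring
  have : (s • v - u) r = s * v r - u r := rfl
  rw [this]
  have hvr : v r = ∑' n, f n r := rfl
  rw [hvr, hzero, h0]
  field_simp
  ring

lemma key {T : Matrix (Fin N) (Fin N) ℝ} (hT : ∀ r s, 0 ≤ T r s)
    {K : Set (Fin N → ℝ)} (hKclosed : IsClosed K)
    (hKnn : ∀ x ∈ K, ∀ r, 0 ≤ x r)
    (hKadd : ∀ x ∈ K, ∀ y ∈ K, x + y ∈ K)
    (hKsmul : ∀ x ∈ K, ∀ c : ℝ, 0 ≤ c → c • x ∈ K)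
    (hKT : ∀ x ∈ K, T.mulVec x ∈ K)
    {c : ℝ} (hc : 0 < c) {x : Fin N → ℝ} (hxK : x ∈ K) (hxne : x ≠ 0)
    (hsup : ∀ r, T.mulVec x r ≤ c * x r) :
    (∃ w ∈ K, w ≠ 0 ∧ T.mulVec w = c • w) ∨
    (∃ β y, 0 < β ∧ β < c ∧ y ∈ K ∧ (∀ r, x r ≤ y r) ∧ ∀ r, T.mulVec y r ≤ β * y r) := by
  classical
  set z : ℕ → (Fin N → ℝ) := fun n => Nat.rec x (fun _ zn => (1 / c) • T.mulVec zn) n with hz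
  have hz0 : z 0 = x := rfl
  have hzsucc : ∀ n, z (n + 1) = (1 / c) • T.mulVec (z n) := fun n => rfl
  have hzK : ∀ n, z n ∈ K := by
    intro n
    induction n with
    | zero => exact hxK
    | succ n ih => exact hKsmul _ (hKT _ ih) _ (by positivity)
  have hznn : ∀ n r, 0 ≤ z n r := fun n r => hKnn _ (hzK n) r
  have hTz : ∀ n, T.mulVec (z n) = c • z (n + 1) := by
    intro n
    rw [hzsucc n, smul_smul]
    rw [mul_one_div, div_self hc.ne', one_smul]
  have hzdec : ∀ n r, z (n + 1) r ≤ z n r := by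
    intro n
    induction n with
    | zero =>
      intro r
      rw [hzsucc 0, hz0]
      have : ((1 / c) • T.mulVec x) r = (1 / c) * T.mulVec x r := rfl
      rw [this, div_mul_eq_mul_div, one_mul, div_le_iff₀ hc]
      calc T.mulVec x r ≤ c * x r := hsup r
        _ = x r * c := by ring
    | succ n ih =>
      intro r
      rw [hzsucc (n+1), hzsucc n]
      have h1 : ((1 / c) • T.mulVec (z (n+1))) r = (1 / c) * T.mulVec (z (n+1)) r := rfl
      have h2 : ((1 / c) • T.mulVec (z n)) r = (1 / c) * T.mulVec (z n) r := rfl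
      rw [h1, h2]
      exact mul_le_mul_of_nonneg_left (mulVec_mono hT ih r) (by positivity)
  have hzanti : ∀ r, Antitone fun n => z n r := by
    intro r
    exact antitone_nat_of_succ_le fun n => hzdec n r
  have hbdd : ∀ r, BddBelow (Set.range fun n => z n r) :=
    fun r => ⟨0, by rintro t ⟨n, rfl⟩; exact hznn n r⟩
  set w : Fin N → ℝ := fun r => ⨅ n, z n r with hw
  have htendw : ∀ r, Filter.Tendsto (fun n => z n r) Filter.atTop (nhds (w r)) :=
    fun r => tendsto_atTop_ciInf (hzanti r) (hbdd r)
  have htendw' : Filter.Tendsto z Filter.atTop (nhds w) := tendsto_pi_nhds.mpr htendw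
  have hwK : w ∈ K := hKclosed.mem_of_tendsto htendw' (Filter.Eventually.of_forall hzK)
  have hTw : T.mulVec w = c • w := by
    have h1 : ∀ r, Filter.Tendsto (fun n => T.mulVec (z n) r) Filter.atTop (nhds (T.mulVec w r)) := by
      intro r
      have : ∀ n, T.mulVec (z n) r = ∑ j, T r j * z n j := fun n => mulVec_apply' T _ r
      simp_rw [this, mulVec_apply']
      exact tendsto_finset_sum _ fun j _ => (htendw j).const_mul (T r j)
    have h2 : ∀ r, Filter.Tendsto (fun n => (c • z (n+1)) r) Filter.atTop (nhds ((c • w) r)) := by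
      intro r
      have hshift : Filter.Tendsto (fun n => z (n+1) r) Filter.atTop (nhds (w r)) :=
        (htendw r).comp (Filter.tendsto_add_atTop_nat 1)
      have : ∀ n, (c • z (n+1)) r = c * z (n+1) r := fun n => rfl
      simp_rw [this]
      have : (c • w) r = c * w r := rfl
      rw [this]
      exact hshift.const_mul c
    funext r
    refine tendsto_nhds_unique ?_ (h2 r)
    have : ∀ n, T.mulVec (z n) r = (c • z (n+1)) r := fun n => by rw [hTz n]
    simp_rw [← this]
    exact h1 r
  by_cases hwz : w = 0
  · -- right branch
    right
    have hzx : ∀ n r, z n r ≤ x r := by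
      intro n r
      induction n with
      | zero => exact le_rfl
      | succ n ih => exact le_trans (hzdec n r) ih
    have htend0 : ∀ r, Filter.Tendsto (fun n => z n r) Filter.atTop (nhds 0) := by
      intro r
      have := htendw r
      rwa [hwz] at this
    have hchoice : ∀ r : Fin N, ∃ n₀ : ℕ, ∀ n ≥ n₀, z n r ≤ x r / 2 := by
      intro r
      rcases eq_or_lt_of_le (hKnn x hxK r) with hxr | hxr
      · exact ⟨0, fun n _ => by
          have h1 := hzx n r
          have h2 := hznn n r
          have : z n r = 0 := le_antisymm (by rw [← hxr] at h1; exact h1) h2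
          rw [this, ← hxr]; norm_num⟩
      · have hev := (htend0 r).eventually_le_const (show (0:ℝ) < x r / 2 by positivity)
        rcases Filter.eventually_atTop.mp hev with ⟨n₀, hn₀⟩
        exact ⟨n₀, fun n hn => (hn₀ n hn)⟩
    choose n₀ hn₀ using hchoice
    set m : ℕ := Finset.univ.sup n₀ with hm
    have hzm : ∀ r, z (m+1) r ≤ x r / 2 := by
      intro r
      exact hn₀ r (m+1) (le_trans (Finset.le_sup (Finset.mem_univ r)) (Nat.le_succ m))
    set η : ℝ := 1 / (2 * (m+1)) with hη
    have hη0 : 0 < η := by positivity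
    have hη1 : η ≤ 1 / 2 := by
      rw [hη]
      rw [div_le_div_iff₀ (by positivity) (by norm_num)]
      have : (1:ℝ) ≤ (m+1 : ℝ) := by exact_mod_cast Nat.succ_le_succ (Nat.zero_le m)
      nlinarith
    set β : ℝ := c * (1 - η) with hβ
    have hβ0 : 0 < β := by
      apply mul_pos hc
      linarith
    have hβc : β < c := by
      rw [hβ]
      nlinarith
    have hbern : (1/2 : ℝ) ≤ (1 - η) ^ (m+1) := by
      have h := one_add_mul_le_pow (a := -η) (by linarith) (m+1)
      have hmul : ((m+1 : ℕ) : ℝ) * η = 1/2 := by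
        push_cast
        rw [hη]
        have : (2 * ((m:ℝ) + 1)) ≠ 0 := by positivity
        field_simp
      have heq : 1 + ((m+1 : ℕ) : ℝ) * (-η) = 1/2 := by
        rw [mul_neg, hmul]; norm_num
      rw [heq] at h
      simpa [sub_eq_add_neg] using h
    -- (T^n) x = c^n • z n
    have hpowz : ∀ n, (T ^ n).mulVec x = c ^ n • z n := by
      intro n
      induction n with
      | zero => simp [Matrix.one_mulVec, hz0]
      | succ n ih =>
        have h1 : (T ^ (n+1)).mulVec x = T.mulVec ((T ^ n).mulVec x) := by
          rw [Matrix.mulVec_mulVec, ← pow_succ']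
        rw [h1, ih, Matrix.mulVec_smul, hTz n, smul_smul, pow_succ]
    have hTm : ∀ r, (T ^ (m+1)).mulVec x r ≤ β ^ (m+1) * x r := by
      intro r
      rw [hpowz (m+1)]
      have h1 : (c ^ (m+1) • z (m+1)) r = c ^ (m+1) * z (m+1) r := rfl
      rw [h1]
      calc c ^ (m+1) * z (m+1) r ≤ c ^ (m+1) * (x r / 2) :=
            mul_le_mul_of_nonneg_left (hzm r) (by positivity)
        _ = c ^ (m+1) * (1/2) * x r := by ring
        _ ≤ c ^ (m+1) * (1 - η) ^ (m+1) * x r := by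
            refine mul_le_mul_of_nonneg_right ?_ (hKnn x hxK r)
            exact mul_le_mul_of_nonneg_left hbern (by positivity)
        _ = β ^ (m+1) * x r := by rw [hβ, mul_pow]
    set g : ℕ → (Fin N → ℝ) := fun j => (β⁻¹) ^ j • (T ^ j).mulVec x with hg
    have hgK : ∀ j, g j ∈ K := by
      intro j
      refine hKsmul _ ?_ _ (by positivity)
      induction j with
      | zero => simpa [Matrix.one_mulVec] using hxK
      | succ j ih =>
        have : (T ^ (j+1)).mulVec x = T.mulVec ((T ^ j).mulVec x) := by
          rw [Matrix.mulVec_mulVec, ← pow_succ']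
        rw [this]
        exact hKT _ ih
    have hgnn : ∀ j r, 0 ≤ g j r := fun j r => hKnn _ (hgK j) r
    set y : Fin N → ℝ := ∑ j ∈ Finset.range (m+1), g j with hy
    have h0K : (0 : Fin N → ℝ) ∈ K := by
      have := hKsmul x hxK 0 le_rfl
      simpa using this
    have hsumK : ∀ n, (∑ j ∈ Finset.range n, g j) ∈ K := by
      intro n
      induction n with
      | zero => simpa using h0K
      | succ n ih =>
        rw [Finset.sum_range_succ]
        exact hKadd _ ih _ (hgK n)
    have hyK : y ∈ K := hsumK (m+1)
    have hg0 : g 0 = x := by simp [hg, Matrix.one_mulVec]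
    have hyx : ∀ r, x r ≤ y r := by
      intro r
      have : y r = ∑ j ∈ Finset.range (m+1), g j r := by
        rw [hy]; simp [Finset.sum_apply]
      rw [this]
      have h0 : g 0 r = x r := by rw [hg0]
      rw [← h0]
      exact Finset.single_le_sum (fun j _ => hgnn j r) (Finset.mem_range.mpr (Nat.succ_pos m))
    refine ⟨β, y, hβ0, hβc, hyK, hyx, ?_⟩
    -- main inequality
    have hβg : ∀ j, β • g (j+1) = (β⁻¹) ^ j • (T ^ (j+1)).mulVec x := by
      intro j
      rw [hg]
      simp only []
      rw [smul_smul]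
      congr 1
      rw [pow_succ, show β * ((β⁻¹) ^ j * β⁻¹) = (β * β⁻¹) * (β⁻¹) ^ j by ring,
        mul_inv_cancel₀ hβ0.ne', one_mul]
    have hTy : T.mulVec y = β • (y + g (m+1) - x) := by
      have h1 : T.mulVec y = ∑ j ∈ Finset.range (m+1), T.mulVec (g j) := by
        rw [hy]
        exact map_sum (Matrix.mulVecLin T) g (Finset.range (m+1))
      have h2 : ∀ j, T.mulVec (g j) = (β⁻¹) ^ j • (T ^ (j+1)).mulVec x := by
        intro j
        rw [hg]
        simp only []
        rw [Matrix.mulVec_smul]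
        congr 1
        rw [Matrix.mulVec_mulVec, ← pow_succ']
      have h3 : T.mulVec y = ∑ j ∈ Finset.range (m+1), β • g (j+1) := by
        rw [h1]
        exact Finset.sum_congr rfl fun j _ => by rw [h2 j, ← hβg j]
      rw [h3, ← Finset.smul_sum]
      congr 1
      have h4 := Finset.sum_range_succ' g (m+1)
      have h5 : ∑ j ∈ Finset.range (m+2), g j = y + g (m+1) := by
        rw [Finset.sum_range_succ, hy]
      rw [h5, hg0] at h4
      have h7 : ∑ j ∈ Finset.range (m+1), g (j+1) = y + g (m+1) - x := by
        rw [eq_sub_iff_add_eq]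
        exact h4.symm
      rw [h7]
    intro r
    have hgm : g (m+1) r ≤ x r := by
      have h1 : g (m+1) r = (β⁻¹) ^ (m+1) * (T ^ (m+1)).mulVec x r := rfl
      rw [h1]
      calc (β⁻¹) ^ (m+1) * (T ^ (m+1)).mulVec x r
          ≤ (β⁻¹) ^ (m+1) * (β ^ (m+1) * x r) :=
            mul_le_mul_of_nonneg_left (hTm r) (by positivity)
        _ = x r := by
            rw [← mul_assoc, ← mul_pow, inv_mul_cancel₀ hβ0.ne', one_pow, one_mul]
    have h6 : T.mulVec y r = β * (y r + g (m+1) r - x r) := by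
      rw [hTy]; rfl
    rw [h6]
    nlinarith [hβ0]
  · -- left branch
    exact Or.inl ⟨w, hwK, hwz, hTw⟩

lemma cone_eigen {T : Matrix (Fin N) (Fin N) ℝ} (hT : ∀ r s, 0 ≤ T r s)
    {K : Set (Fin N → ℝ)} (hKclosed : IsClosed K)
    (hKnn : ∀ x ∈ K, ∀ r, 0 ≤ x r)
    (hKadd : ∀ x ∈ K, ∀ y ∈ K, x + y ∈ K)
    (hKsmul : ∀ x ∈ K, ∀ c : ℝ, 0 ≤ c → c • x ∈ K)
    (hKT : ∀ x ∈ K, T.mulVec x ∈ K)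
    {u : Fin N → ℝ} (hu : u ∈ K) (hune : u ≠ 0) :
    ∃ w ∈ K, w ≠ 0 ∧ ∃ c : ℝ, 0 ≤ c ∧ T.mulVec w = c • w := by
  classical
  -- positivity of the sum functional on nonzero elements of K
  have hφpos : ∀ x, x ∈ K → x ≠ 0 → 0 < ∑ r, x r := by
    intro x hxK hxne
    rcases Function.ne_iff.mp hxne with ⟨r, hr⟩
    refine Finset.sum_pos' (fun j _ => hKnn x hxK j) ⟨r, Finset.mem_univ r, ?_⟩
    rcases lt_or_eq_of_le (hKnn x hxK r) with h | h
    · exact h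
    · exact absurd h.symm hr
  set P : Set ℝ := {s : ℝ | ∃ x, x ∈ K ∧ x ≠ 0 ∧ ∀ r, T.mulVec x r ≤ s * x r} with hP
  -- P nonempty
  have hPne : P.Nonempty := by
    set R := ∑ r, ∑ c, T r c with hR
    have hR0 : 0 ≤ R := Finset.sum_nonneg fun r _ => Finset.sum_nonneg fun c _ => hT r c
    obtain ⟨v, hvK, hvlb, hvT⟩ := neumann hT hKclosed hKnn hKadd hKsmul hKT hu
      (s := R + 1) (by linarith) (by linarith)
    refine ⟨R + 1, v, hvK, ?_, ?_⟩
    · rcases Function.ne_iff.mp hune with ⟨r, hr⟩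
      have hur : 0 < u r := by
        rcases lt_or_eq_of_le (hKnn u hu r) with h | h
        · exact h
        · exact absurd h.symm hr
      intro h0
      have h2 := hvlb r
      rw [h0] at h2
      simp only [Pi.zero_apply] at h2
      have h3 : (0:ℝ) < u r / (R+1) := by positivity
      linarith
    · intro r
      have h1 : T.mulVec v r = (R+1) * v r - u r := by
        rw [hvT]
        have : ((R+1) • v - u) r = (R+1) * v r - u r := rfl
        rw [this]
      rw [h1]
      have := hKnn u hu r
      linarith
  -- bddBelow
  have hPbdd : BddBelow P := by
    refine ⟨0, ?_⟩
    rintro s ⟨x, hxK, hxne, hx⟩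
    rcases Function.ne_iff.mp hxne with ⟨r, hr⟩
    have hxr : 0 < x r := by
      rcases lt_or_eq_of_le (hKnn x hxK r) with h | h
      · exact h
      · exact absurd h.symm hr
    have h0 : 0 ≤ T.mulVec x r := mulVec_nonneg hT (hKnn x hxK) r
    nlinarith [hx r]
  set c := sInf P with hc
  have hc0 : 0 ≤ c := le_csInf hPne (by rintro s ⟨x, hxK, hxne, hx⟩
                                        rcases Function.ne_iff.mp hxne with ⟨r, hr⟩
                                        have hxr : 0 < x r := by
                                          rcases lt_or_eq_of_le (hKnn x hxK r) with h | h
                                          · exact h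
                                          · exact absurd h.symm hr
                                        have h0 : 0 ≤ T.mulVec x r := mulVec_nonneg hT (hKnn x hxK) r
                                        nlinarith [hx r])
  -- attainment
  have hseq : ∀ n : ℕ, ∃ s, s ∈ P ∧ s < c + 1/(n+1) := by
    intro n
    have : c < c + 1/(n+1) := by
      have : (0:ℝ) < 1/(n+1) := by positivity
      linarith
    obtain ⟨s, hsP, hs⟩ := exists_lt_of_csInf_lt hPne this
    exact ⟨s, hsP, hs⟩
  choose sq hsqP hsqlt using hseq
  have hsqge : ∀ n, c ≤ sq n := fun n => csInf_le hPbdd (hsqP n)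
  choose xs hxsK hxsne hxsineq using fun n => (hsqP n)
  -- normalize
  set ys : ℕ → (Fin N → ℝ) := fun n => (∑ r, xs n r)⁻¹ • xs n with hys
  have hφx : ∀ n, 0 < ∑ r, xs n r := fun n => hφpos _ (hxsK n) (hxsne n)
  have hysK : ∀ n, ys n ∈ K := fun n => hKsmul _ (hxsK n) _ (inv_nonneg.mpr (hφx n).le)
  have hyssum : ∀ n, ∑ r, ys n r = 1 := by
    intro n
    rw [hys]
    simp only [Pi.smul_apply, smul_eq_mul, ← Finset.mul_sum]
    exact inv_mul_cancel₀ (hφx n).ne'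
  have hysineq : ∀ n r, T.mulVec (ys n) r ≤ sq n * ys n r := by
    intro n r
    rw [hys]
    simp only []
    rw [Matrix.mulVec_smul]
    have h1 : ((∑ r, xs n r)⁻¹ • T.mulVec (xs n)) r = (∑ r, xs n r)⁻¹ * T.mulVec (xs n) r := rfl
    have h2 : (sq n) * ((∑ r, xs n r)⁻¹ • xs n) r = (∑ r, xs n r)⁻¹ * (sq n * xs n r) := by
      have : ((∑ r, xs n r)⁻¹ • xs n) r = (∑ r, xs n r)⁻¹ * xs n r := rfl
      rw [this]; ring
    rw [h1, h2]
    exact mul_le_mul_of_nonneg_left (hxsineq n r) (inv_nonneg.mpr (hφx n).le)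
  -- compactness
  set S : Set (Fin N → ℝ) := {x | x ∈ K ∧ ∑ r, x r = 1} with hS
  have hScl : IsClosed S := by
    have h2 : IsClosed {x : Fin N → ℝ | ∑ r, x r = 1} :=
      isClosed_eq (by continuity) continuous_const
    exact hKclosed.inter h2
  have hSbd : Bornology.IsBounded S := by
    refine (Metric.isBounded_closedBall (x := (0 : Fin N → ℝ)) (r := 1)).subset ?_
    rintro x ⟨hxK, hxs⟩
    rw [Metric.mem_closedBall, dist_zero_right]
    rw [pi_norm_le_iff_of_nonneg (by norm_num)]
    intro i
    rw [Real.norm_eq_abs, abs_of_nonneg (hKnn x hxK i)]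
    rw [← hxs]
    exact Finset.single_le_sum (fun j _ => hKnn x hxK j) (Finset.mem_univ i)
  have hScomp : IsCompact S := Metric.isCompact_of_isClosed_isBounded hScl hSbd
  have hysS : ∀ n, ys n ∈ S := fun n => ⟨hysK n, hyssum n⟩
  obtain ⟨xstar, hxstarS, ι, hι, htend⟩ := hScomp.tendsto_subseq hysS
  have hxstarK : xstar ∈ K := hxstarS.1
  have hxstarne : xstar ≠ 0 := by
    intro h0
    have := hxstarS.2
    rw [h0] at this
    simp at this
  -- limit of sq ∘ ι
  have hsqtend : Filter.Tendsto (fun n => sq (ι n)) Filter.atTop (nhds c) := by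
    have hub : ∀ n, sq (ι n) ≤ c + 1/(n+1) := by
      intro n
      have h1 : sq (ι n) < c + 1/((ι n : ℝ)+1) := hsqlt (ι n)
      have h2 : (1:ℝ)/((ι n : ℝ)+1) ≤ 1/((n:ℝ)+1) := by
        have h3 : ((n:ℝ)+1) ≤ ((ι n : ℝ)+1) := by
          have h4 : (n:ℝ) ≤ (ι n : ℝ) := by exact_mod_cast hι.le_apply
          linarith
        exact one_div_le_one_div_of_le (by positivity) h3
      linarith
    have hlim : Filter.Tendsto (fun n : ℕ => c + 1/((n:ℝ)+1)) Filter.atTop (nhds c) := by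
      have : Filter.Tendsto (fun n : ℕ => 1/((n:ℝ)+1)) Filter.atTop (nhds 0) :=
        tendsto_one_div_add_atTop_nhds_zero_nat
      have := Filter.Tendsto.const_add c this
      simpa using this
    exact tendsto_of_tendsto_of_tendsto_of_le_of_le tendsto_const_nhds hlim
      (fun n => hsqge (ι n)) hub
  -- limit inequality
  have hxstarineq : ∀ r, T.mulVec xstar r ≤ c * xstar r := by
    intro r
    have hLHS : Filter.Tendsto (fun n => T.mulVec (ys (ι n)) r) Filter.atTop (nhds (T.mulVec xstar r)) := by
      simp_rw [mulVec_apply']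
      refine tendsto_finset_sum _ fun j _ => ?_
      have : Filter.Tendsto (fun n => ys (ι n) j) Filter.atTop (nhds (xstar j)) :=
        (tendsto_pi_nhds.mp htend) j
      exact this.const_mul (T r j)
    have hRHS : Filter.Tendsto (fun n => sq (ι n) * ys (ι n) r) Filter.atTop (nhds (c * xstar r)) :=
      hsqtend.mul ((tendsto_pi_nhds.mp htend) r)
    exact le_of_tendsto_of_tendsto' hLHS hRHS (fun n => hysineq (ι n) r)
  -- finish
  rcases eq_or_lt_of_le hc0 with hczero | hcpos
  · refine ⟨xstar, hxstarK, hxstarne, 0, le_rfl, ?_⟩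
    funext r
    have h1 : T.mulVec xstar r ≤ 0 := by
      have := hxstarineq r
      rw [← hczero] at this
      simpa using this
    have h2 : 0 ≤ T.mulVec xstar r := mulVec_nonneg hT (hKnn _ hxstarK) r
    have : T.mulVec xstar r = 0 := le_antisymm h1 h2
    rw [this]
    simp
  · rcases key hT hKclosed hKnn hKadd hKsmul hKT hcpos hxstarK hxstarne hxstarineq with
      ⟨w, hwK, hwne, hwT⟩ | ⟨β, y, hβ0, hβc, hyK, hyx, hyineq⟩
    · exact ⟨w, hwK, hwne, c, hc0, hwT⟩
    · exfalso
      have hyne : y ≠ 0 := by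
        intro h0
        rcases Function.ne_iff.mp hxstarne with ⟨r, hr⟩
        have hxr : 0 < xstar r := by
          rcases lt_or_eq_of_le (hKnn _ hxstarK r) with h | h
          · exact h
          · exact absurd h.symm hr
        have := hyx r
        rw [h0] at this
        simp only [Pi.zero_apply] at this
        linarith
      have : β ∈ P := ⟨y, hyK, hyne, hyineq⟩
      have := csInf_le hPbdd this
      rw [← hc] at this
      linarith

lemma perron_base {T : Matrix (Fin N) (Fin N) ℝ} (hT : ∀ r s, 0 ≤ T r s)
    (hρ : 0 < specRad T) :
    ∃ w : Fin N → ℝ, (∀ r, 0 ≤ w r) ∧ w ≠ 0 ∧ T.mulVec w = specRad T • w := by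
  classical
  set ρ := specRad T with hρdef
  -- N > 0
  have hN : 0 < N := by
    by_contra hN
    push_neg at hN
    have hN0 : N = 0 := Nat.le_zero.mp hN
    subst hN0
    -- specSet is empty
    have hempty : specSet T = ∅ := by
      ext r
      simp only [Set.mem_empty_iff_false, iff_false]
      rintro ⟨μ, hμ, rfl⟩
      obtain ⟨ψ, hψ, -⟩ := (spec_iff T μ).mp hμ
      exact hψ (funext fun j => j.elim0)
    have : ρ = 0 := by
      rw [hρdef]
      show sSup (specSet T) = 0
      rw [hempty, Real.sSup_empty]
    rw [this] at hρ
    exact lt_irrefl 0 hρ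
  -- the nonnegative orthant
  set K : Set (Fin N → ℝ) := {x | ∀ r, 0 ≤ x r} with hK
  have hKclosed : IsClosed K := by
    have : K = ⋂ r, {x : Fin N → ℝ | 0 ≤ x r} := by
      ext x; simp [hK, Set.mem_iInter]
    rw [this]
    exact isClosed_iInter fun r => isClosed_le continuous_const (continuous_apply r)
  have hKnn : ∀ x ∈ K, ∀ r, 0 ≤ x r := fun x hx => hx
  have hKadd : ∀ x ∈ K, ∀ y ∈ K, x + y ∈ K := fun x hx y hy r => add_nonneg (hx r) (hy r)
  have hKsmul : ∀ x ∈ K, ∀ c : ℝ, 0 ≤ c → c • x ∈ K := fun x hx c hc r => mul_nonneg hc (hx r)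
  have hKT : ∀ x ∈ K, T.mulVec x ∈ K := fun x hx => mulVec_nonneg hT hx
  -- determinant nonzero above the spectral radius
  have hdet : ∀ s : ℝ, ρ < s → (s • (1 : Matrix (Fin N) (Fin N) ℝ) - T).det ≠ 0 := by
    intro s hs hdet0
    have hmapeq : ((s • (1 : Matrix (Fin N) (Fin N) ℝ) - T).map (Complex.ofReal : ℝ → ℂ))
        = (s : ℂ) • (1 : Matrix (Fin N) (Fin N) ℂ) - T.map (Complex.ofReal : ℝ → ℂ) := by
      ext i j
      by_cases h : i = j <;>
        simp [Matrix.map_apply, Matrix.sub_apply, Matrix.smul_apply, Matrix.one_apply, h]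
    have hdetC : ((s : ℂ) • (1 : Matrix (Fin N) (Fin N) ℂ) - T.map (Complex.ofReal : ℝ → ℂ)).det = 0 := by
      rw [← hmapeq]
      have := (Complex.ofRealHom : ℝ →+* ℂ).map_det (s • (1 : Matrix (Fin N) (Fin N) ℝ) - T)
      have h2 : ((Complex.ofRealHom : ℝ →+* ℂ).mapMatrix (s • (1 : Matrix (Fin N) (Fin N) ℝ) - T))
          = (s • (1 : Matrix (Fin N) (Fin N) ℝ) - T).map (Complex.ofReal : ℝ → ℂ) := rfl
      rw [h2] at this
      rw [← this, hdet0]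
      simp
    obtain ⟨ψ, hψne, hψ⟩ := Matrix.exists_mulVec_eq_zero_iff.mpr hdetC
    have heig : (T.map (Complex.ofReal : ℝ → ℂ)).mulVec ψ = (s : ℂ) • ψ := by
      have := hψ
      rw [Matrix.sub_mulVec, Matrix.smul_mulVec, Matrix.one_mulVec, sub_eq_zero] at this
      exact this.symm
    have hmem : (s : ℂ) ∈ spectrum ℂ (T.map (Complex.ofReal : ℝ → ℂ)) :=
      (spec_iff T (s : ℂ)).mpr ⟨ψ, hψne, heig⟩
    have : s ≤ ρ := by
      have hsmem : s ∈ specSet T := ⟨(s : ℂ), hmem, by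
        rw [Complex.norm_real, Real.norm_eq_abs, abs_of_pos (lt_trans hρ hs)]⟩
      exact le_specRad_of_mem hsmem
    linarith
  -- the resolvent vector
  set vfun : ℝ → (Fin N → ℝ) := fun s => ((s • (1 : Matrix (Fin N) (Fin N) ℝ) - T)⁻¹).mulVec 1 with hvfun
  have hsolve : ∀ s : ℝ, ρ < s → (s • (1 : Matrix (Fin N) (Fin N) ℝ) - T).mulVec (vfun s) = 1 := by
    intro s hs
    rw [hvfun]
    simp only []
    rw [Matrix.mulVec_mulVec]
    rw [Matrix.mul_nonsing_inv _ (isUnit_iff_ne_zero.mpr (hdet s hs))]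
    rw [Matrix.one_mulVec]
  have hinj : ∀ s : ℝ, ρ < s → ∀ a b : Fin N → ℝ,
      (s • (1 : Matrix (Fin N) (Fin N) ℝ) - T).mulVec a = (s • (1 : Matrix (Fin N) (Fin N) ℝ) - T).mulVec b → a = b := by
    intro s hs a b hab
    by_contra hne
    have hd : a - b ≠ 0 := sub_ne_zero_of_ne hne
    have : (s • (1 : Matrix (Fin N) (Fin N) ℝ) - T).mulVec (a - b) = 0 := by
      rw [Matrix.mulVec_sub, hab, sub_self]
    exact hdet s hs (Matrix.exists_mulVec_eq_zero_iff.mp ⟨a - b, hd, this⟩)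
  -- basic identity : T (vfun s) = s vfun s - 1 and positivity implications
  have hTv : ∀ s : ℝ, ρ < s → T.mulVec (vfun s) = s • vfun s - 1 := by
    intro s hs
    have h1 := hsolve s hs
    rw [Matrix.sub_mulVec, Matrix.smul_mulVec, Matrix.one_mulVec] at h1
    funext r
    have := congrFun h1 r
    have h2 : (s • vfun s - (1 : Fin N → ℝ)) r = s * vfun s r - 1 := rfl
    rw [h2]
    have h3 : (s • vfun s) r - T.mulVec (vfun s) r = 1 := this
    have h4 : (s • vfun s) r = s * vfun s r := rfl
    linarith
  have hpos_of_nonneg : ∀ s : ℝ, ρ < s → (∀ r, 0 ≤ vfun s r) → ∀ r, (1:ℝ)/s ≤ vfun s r := by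
    intro s hs hnn r
    have h1 := congrFun (hTv s hs) r
    have h2 : T.mulVec (vfun s) r = s * vfun s r - 1 := by
      rw [h1]; rfl
    have h3 : 0 ≤ T.mulVec (vfun s) r := mulVec_nonneg hT hnn r
    rw [div_le_iff₀ (lt_trans hρ hs)]
    nlinarith
  -- continuity of vfun on Ioi ρ
  have hcont : ∀ s : ℝ, ρ < s → ∀ r, ContinuousAt (fun t => vfun t r) s := by
    intro s hs r
    have hM : Continuous fun t : ℝ => t • (1 : Matrix (Fin N) (Fin N) ℝ) - T :=
      (continuous_id.smul continuous_const).sub continuous_const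
    have hu : IsUnit ((s • (1 : Matrix (Fin N) (Fin N) ℝ) - T).det) :=
      isUnit_iff_ne_zero.mpr (hdet s hs)
    have hinv0 : ContinuousAt Ring.inverse ((s • (1 : Matrix (Fin N) (Fin N) ℝ) - T).det) := by
      have := NormedRing.inverse_continuousAt hu.unit
      simpa using this
    have hinvc : ContinuousAt (fun t : ℝ => (t • (1 : Matrix (Fin N) (Fin N) ℝ) - T)⁻¹) s :=
      ContinuousAt.comp (g := (Inv.inv : Matrix (Fin N) (Fin N) ℝ → Matrix (Fin N) (Fin N) ℝ))
        (f := fun t : ℝ => t • (1 : Matrix (Fin N) (Fin N) ℝ) - T) (x := s)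
        (continuousAt_matrix_inv _ hinv0) hM.continuousAt
    have heval : ∀ j, ContinuousAt (fun t : ℝ => (t • (1 : Matrix (Fin N) (Fin N) ℝ) - T)⁻¹ r j) s := by
      intro j
      exact (((continuous_apply j).comp (continuous_apply r)).continuousAt).comp hinvc
    have hsumc : ContinuousAt (fun t : ℝ => ∑ j, (t • (1 : Matrix (Fin N) (Fin N) ℝ) - T)⁻¹ r j) s :=
      tendsto_finset_sum _ fun j _ => heval j
    have hfun : (fun t => vfun t r)
        = fun t : ℝ => ∑ j, (t • (1 : Matrix (Fin N) (Fin N) ℝ) - T)⁻¹ r j := by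
      funext t
      rw [hvfun]
      simp only []
      rw [mulVec_apply']
      simp
    rw [hfun]
    exact hsumc
  -- positivity of vfun on Ioi ρ, via connectedness
  have hvpos : ∀ s : ℝ, ρ < s → ∀ r, 0 ≤ vfun s r := by
    by_contra hcon
    push_neg at hcon
    obtain ⟨s1, hs1, r1, hr1⟩ := hcon
    set U : Set ℝ := {s | ρ < s ∧ ∀ r, 0 < vfun s r} with hU
    set V : Set ℝ := {s | ρ < s ∧ ∃ r, vfun s r < 0} with hV
    have hUopen : IsOpen U := by
      rw [isOpen_iff_mem_nhds]
      rintro s ⟨hs, hvs⟩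
      have h1 : ∀ᶠ t in nhds s, ρ < t := eventually_gt_nhds hs
      have h2 : ∀ᶠ t in nhds s, ∀ r, 0 < vfun t r := by
        rw [Filter.eventually_all]
        intro r
        exact (hcont s hs r).eventually (eventually_gt_nhds (hvs r))
      filter_upwards [h1, h2] with t ht1 ht2
      exact ⟨ht1, ht2⟩
    have hVopen : IsOpen V := by
      rw [isOpen_iff_mem_nhds]
      rintro s ⟨hs, r, hvs⟩
      have h1 : ∀ᶠ t in nhds s, ρ < t := eventually_gt_nhds hs
      have h2 : ∀ᶠ t in nhds s, vfun t r < 0 :=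
        (hcont s hs r).eventually (eventually_lt_nhds hvs)
      filter_upwards [h1, h2] with t ht1 ht2
      exact ⟨ht1, r, ht2⟩
    have hcover : Set.Ioi ρ ⊆ U ∪ V := by
      intro s hs
      by_cases h : ∀ r, 0 ≤ vfun s r
      · left
        refine ⟨hs, fun r => ?_⟩
        have := hpos_of_nonneg s hs h r
        have hspos : 0 < s := lt_trans hρ hs
        have : (0:ℝ) < 1/s := by positivity
        linarith [hpos_of_nonneg s hs h r]
      · right
        push_neg at h
        exact ⟨hs, h⟩
    -- U is nonempty on Ioi ρ, via the Neumann series at large s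
    set R := ∑ r, ∑ c, T r c with hR
    have hR0 : 0 ≤ R := Finset.sum_nonneg fun r _ => Finset.sum_nonneg fun c _ => hT r c
    set s0 : ℝ := max (ρ + 1) (R + 1) with hs0
    have hs0ρ : ρ < s0 := lt_of_lt_of_le (by linarith) (le_max_left _ _)
    have hs0R : R < s0 := lt_of_lt_of_le (by linarith) (le_max_right _ _)
    have hs0pos : 0 < s0 := lt_trans hρ hs0ρ
    have h1K : (1 : Fin N → ℝ) ∈ K := fun r => by norm_num
    obtain ⟨v, hvK, hvlb, hvT⟩ := neumann hT hKclosed hKnn hKadd hKsmul hKT h1K hs0R hs0pos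
    have hveq : v = vfun s0 := by
      apply hinj s0 hs0ρ
      rw [hsolve s0 hs0ρ]
      funext r
      have h2 : (s0 • (1 : Matrix (Fin N) (Fin N) ℝ) - T).mulVec v = s0 • v - T.mulVec v := by
        rw [Matrix.sub_mulVec, Matrix.smul_mulVec, Matrix.one_mulVec]
      rw [h2, hvT]
      have : (s0 • v - (s0 • v - (1:Fin N → ℝ))) r = 1 := by
        simp
      rw [this]
      rfl
    have hUne : (Set.Ioi ρ ∩ U).Nonempty := by
      refine ⟨s0, hs0ρ, hs0ρ, fun r => ?_⟩
      rw [← hveq]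
      have := hvlb r
      have h3 : (0:ℝ) < 1/s0 := by positivity
      have h4 : (1 : Fin N → ℝ) r = 1 := rfl
      rw [h4] at this
      linarith
    have hVne : (Set.Ioi ρ ∩ V).Nonempty := ⟨s1, hs1, hs1, r1, hr1⟩
    obtain ⟨t, -, htU, htV⟩ := isPreconnected_Ioi (a := ρ) U V hUopen hVopen hcover hUne hVne
    obtain ⟨-, hall⟩ := htU
    obtain ⟨-, r2, hr2⟩ := htV
    exact absurd (hall r2) (not_lt.mpr hr2.le)
  -- sequence s_n ↓ ρ
  set sq : ℕ → ℝ := fun n => ρ + 1/(n+1) with hsq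
  have hsqρ : ∀ n, ρ < sq n := by
    intro n
    have : (0:ℝ) < 1/(n+1) := by positivity
    rw [hsq]; simp only []; linarith
  have hsqle : ∀ n, sq n ≤ ρ + 1 := by
    intro n
    rw [hsq]
    simp only []
    have h1 : (1:ℝ) ≤ (n:ℝ)+1 := by
      have : (0:ℝ) ≤ n := Nat.cast_nonneg n
      linarith
    have : (1:ℝ)/((n:ℝ)+1) ≤ 1 := by
      rw [div_le_one (by linarith)]
      linarith
    linarith
  have hsqtend : Filter.Tendsto sq Filter.atTop (nhds ρ) := by
    have h1 : Filter.Tendsto (fun n : ℕ => 1/((n:ℝ)+1)) Filter.atTop (nhds 0) :=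
      tendsto_one_div_add_atTop_nhds_zero_nat
    have := Filter.Tendsto.const_add ρ h1
    simpa [hsq] using this
  set vn : ℕ → (Fin N → ℝ) := fun n => vfun (sq n) with hvn
  have hvnn : ∀ n r, 0 ≤ vn n r := fun n r => hvpos (sq n) (hsqρ n) r
  have hvlb : ∀ n r, 1/(sq n) ≤ vn n r := fun n r => hpos_of_nonneg (sq n) (hsqρ n) (hvnn n) r
  have hvT : ∀ n, T.mulVec (vn n) = sq n • vn n - 1 := fun n => hTv (sq n) (hsqρ n)
  set φn : ℕ → ℝ := fun n => ∑ r, vn n r with hφn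
  have hφlb : ∀ n, (N:ℝ)/(ρ+1) ≤ φn n := by
    intro n
    have h1 : ∀ r : Fin N, 1/(ρ+1) ≤ vn n r := by
      intro r
      refine le_trans ?_ (hvlb n r)
      apply one_div_le_one_div_of_le
      · exact lt_trans hρ (hsqρ n)
      · exact hsqle n
    calc (N:ℝ)/(ρ+1) = ∑ _r : Fin N, 1/(ρ+1) := by
          rw [Finset.sum_const, Finset.card_univ, Fintype.card_fin]
          rw [nsmul_eq_mul]
          ring
      _ ≤ ∑ r, vn n r := Finset.sum_le_sum fun r _ => h1 r
  have hφpos : ∀ n, 0 < φn n := by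
    intro n
    refine lt_of_lt_of_le ?_ (hφlb n)
    have : (0:ℝ) < (N:ℝ) := by exact_mod_cast hN
    positivity
  set tn : ℕ → ℝ := fun n => (φn n)⁻¹ with htn
  have htnpos : ∀ n, 0 < tn n := fun n => inv_pos.mpr (hφpos n)
  have htnub : ∀ n, tn n ≤ (ρ+1)/N := by
    intro n
    rw [htn]
    simp only []
    have hNpos : (0:ℝ) < (N:ℝ) := by exact_mod_cast hN
    have h1 : ((N:ℝ)/(ρ+1))⁻¹ = (ρ+1)/(N:ℝ) := by rw [inv_div]
    rw [← h1]
    exact inv_anti₀ (by positivity) (hφlb n)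
  set yn : ℕ → (Fin N → ℝ) := fun n => tn n • vn n with hyn
  have hynnn : ∀ n r, 0 ≤ yn n r := fun n r => mul_nonneg (htnpos n).le (hvnn n r)
  have hynsum : ∀ n, ∑ r, yn n r = 1 := by
    intro n
    have : ∑ r, yn n r = tn n * φn n := by
      rw [hyn, hφn]
      simp only [Pi.smul_apply, smul_eq_mul, Finset.mul_sum]
    rw [this, htn]
    exact inv_mul_cancel₀ (hφpos n).ne'
  have hynT : ∀ n r, T.mulVec (yn n) r = sq n * yn n r - tn n := by
    intro n r
    rw [hyn]
    simp only []
    rw [Matrix.mulVec_smul]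
    have h1 : (tn n • T.mulVec (vn n)) r = tn n * T.mulVec (vn n) r := rfl
    rw [h1, hvT n]
    have h2 : (sq n • vn n - (1 : Fin N → ℝ)) r = sq n * vn n r - 1 := rfl
    rw [h2]
    have h3 : (tn n • vn n) r = tn n * vn n r := rfl
    rw [h3]
    ring
  -- compact simplex
  set S : Set (Fin N → ℝ) := {x | (∀ r, 0 ≤ x r) ∧ ∑ r, x r = 1} with hS
  have hScl : IsClosed S := by
    have h2 : IsClosed {x : Fin N → ℝ | ∑ r, x r = 1} :=
      isClosed_eq (continuous_finset_sum _ fun i _ => continuous_apply i) continuous_const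
    have hSeq : S = K ∩ {x : Fin N → ℝ | ∑ r, x r = 1} := rfl
    rw [hSeq]
    exact hKclosed.inter h2
  have hSbd : Bornology.IsBounded S := by
    refine (Metric.isBounded_closedBall (x := (0 : Fin N → ℝ)) (r := 1)).subset ?_
    rintro x ⟨hx1, hx2⟩
    rw [Metric.mem_closedBall, dist_zero_right]
    rw [pi_norm_le_iff_of_nonneg (by norm_num)]
    intro i
    rw [Real.norm_eq_abs, abs_of_nonneg (hx1 i)]
    rw [← hx2]
    exact Finset.single_le_sum (fun j _ => hx1 j) (Finset.mem_univ i)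
  have hScomp : IsCompact S := Metric.isCompact_of_isClosed_isBounded hScl hSbd
  have hynS : ∀ n, yn n ∈ S := fun n => ⟨hynnn n, hynsum n⟩
  obtain ⟨xstar, hxstarS, ι, hι, htend⟩ := hScomp.tendsto_subseq hynS
  -- extract subsequence along which tn converges
  have htnmem : ∀ n : ℕ, tn (ι n) ∈ Set.Icc (0:ℝ) ((ρ+1)/N) :=
    fun n => ⟨(htnpos (ι n)).le, htnub (ι n)⟩
  obtain ⟨tstar, htstar, κ, hκ, htendt⟩ := isCompact_Icc.tendsto_subseq htnmem
  set g : ℕ → ℕ := fun n => ι (κ n) with hg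
  have hgmono : StrictMono g := hι.comp hκ
  have hgge : ∀ n, n ≤ g n := fun n => hgmono.le_apply
  have htendx : Filter.Tendsto (fun n => yn (g n)) Filter.atTop (nhds xstar) := by
    have := htend.comp hκ.tendsto_atTop
    exact this
  have htendt' : Filter.Tendsto (fun n => tn (g n)) Filter.atTop (nhds tstar) := htendt
  have htendsq : Filter.Tendsto (fun n => sq (g n)) Filter.atTop (nhds ρ) := by
    have hub : ∀ n : ℕ, sq (g n) ≤ ρ + 1/((n:ℝ)+1) := by
      intro n
      rw [hsq]
      simp only []
      have h2 : (1:ℝ)/((g n : ℝ)+1) ≤ 1/((n:ℝ)+1) := by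
        have h3 : ((n:ℝ)+1) ≤ ((g n : ℝ)+1) := by
          have h4 : (n:ℝ) ≤ (g n : ℝ) := by exact_mod_cast hgge n
          linarith
        exact one_div_le_one_div_of_le (by positivity) h3
      linarith
    have h1 : Filter.Tendsto (fun n : ℕ => ρ + 1/((n:ℝ)+1)) Filter.atTop (nhds ρ) := by
      have := Filter.Tendsto.const_add ρ tendsto_one_div_add_atTop_nhds_zero_nat
      simpa using this
    exact tendsto_of_tendsto_of_tendsto_of_le_of_le tendsto_const_nhds h1
      (fun n => (hsqρ (g n)).le) hub
  -- the limit identity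
  have hxstar1 : ∀ r, 0 ≤ xstar r := hxstarS.1
  have hxstar2 : ∑ r, xstar r = 1 := hxstarS.2
  have hxstarne : xstar ≠ 0 := by
    intro h0
    rw [h0] at hxstar2
    simp at hxstar2
  have hlim : ∀ r, T.mulVec xstar r = ρ * xstar r - tstar := by
    intro r
    have hLHS : Filter.Tendsto (fun n => T.mulVec (yn (g n)) r) Filter.atTop
        (nhds (T.mulVec xstar r)) := by
      simp_rw [mulVec_apply']
      refine tendsto_finset_sum _ fun j _ => ?_
      exact ((tendsto_pi_nhds.mp htendx) j).const_mul (T r j)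
    have hRHS : Filter.Tendsto (fun n => sq (g n) * yn (g n) r - tn (g n)) Filter.atTop
        (nhds (ρ * xstar r - tstar)) := by
      exact (htendsq.mul ((tendsto_pi_nhds.mp htendx) r)).sub htendt'
    have heq : ∀ n, T.mulVec (yn (g n)) r = sq (g n) * yn (g n) r - tn (g n) :=
      fun n => hynT (g n) r
    refine tendsto_nhds_unique hLHS ?_
    simp_rw [heq]
    exact hRHS
  rcases eq_or_lt_of_le htstar.1 with ht0 | htpos
  · -- tstar = 0 : eigenvector found
    refine ⟨xstar, hxstar1, hxstarne, ?_⟩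
    funext r
    have := hlim r
    rw [← ht0] at this
    rw [this]
    have : (ρ • xstar) r = ρ * xstar r := rfl
    rw [this]
    ring
  · -- tstar > 0 : strict super-eigenvector, use key
    have hsup : ∀ r, T.mulVec xstar r ≤ ρ * xstar r := by
      intro r
      rw [hlim r]
      linarith
    rcases key hT hKclosed hKnn hKadd hKsmul hKT hρ (fun r => hxstar1 r) hxstarne hsup with
      ⟨w, hwK, hwne, hwT⟩ | ⟨β, y, hβ0, hβρ, hyK, hyx, hyineq⟩
    · exact ⟨w, hwK, hwne, hwT⟩
    · exfalso
      have hxpos : ∀ r, 0 < xstar r := by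
        intro r
        have h1 := hlim r
        have h2 : 0 ≤ T.mulVec xstar r := mulVec_nonneg hT hxstar1 r
        nlinarith
      have hypos : ∀ r, 0 < y r := fun r => lt_of_lt_of_le (hxpos r) (hyx r)
      have := spec_bound hT hypos hβ0 hyineq
      rw [← hρdef] at this
      linarith

end PFaux

open PFaux in
theorem stmt_18 {N k : ℕ} (hk : 0 < k)
    (A : Fin k → Matrix (Fin N) (Fin N) ℝ)
    (hA : ∀ i r s, 0 ≤ A i r s)
    (hcomm : ∀ i j, A i * A j = A j * A i)
    (hmax : ∀ i, specRad (A i) ≤ specRad (A ⟨0, hk⟩))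
    (hone : 1 ≤ specRad (A ⟨0, hk⟩)) :
    ∃ w : Fin N → ℝ, (∀ i, 0 ≤ w i) ∧ (∃ i, 0 < w i) ∧
      ∃ lam : Fin k → ℝ,
        (∀ i, 0 ≤ lam i ∧ lam i ≤ specRad (A ⟨0, hk⟩) ∧
          (A i).mulVec w = lam i • w) ∧
        lam ⟨0, hk⟩ = specRad (A ⟨0, hk⟩) ∧
        {i : Fin k | lam i < specRad (A ⟨0, hk⟩)} ≠ Set.univ := by
  classical
  set i0 : Fin k := ⟨0, hk⟩ with hi0
  set lam0 : ℝ := specRad (A i0) with hlam0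
  have hlam0pos : 0 < lam0 := lt_of_lt_of_le one_pos hone
  -- induction: for every j ≤ k there is a common eigenvector for the first j matrices
  have main : ∀ j : ℕ, j ≤ k → ∃ w : Fin N → ℝ, (∀ r, 0 ≤ w r) ∧ w ≠ 0 ∧
      (A i0).mulVec w = lam0 • w ∧ ∀ i : Fin k, (i : ℕ) < j → ∃ c : ℝ, (A i).mulVec w = c • w := by
    intro j
    induction j with
    | zero =>
      intro _
      obtain ⟨w, hw1, hw2, hw3⟩ := perron_base (hA i0) hlam0pos
      exact ⟨w, hw1, hw2, hw3, fun i hi => absurd hi (Nat.not_lt_zero _)⟩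
    | succ j ih =>
      intro hjk
      obtain ⟨w, hw1, hw2, hw3, hw4⟩ := ih (Nat.le_of_succ_le hjk)
      choose cfun hcfun using hw4
      have hjlt : j < k := hjk
      set Tj : Matrix (Fin N) (Fin N) ℝ := A ⟨j, hjlt⟩ with hTj
      set K : Set (Fin N → ℝ) := {x | (∀ r, 0 ≤ x r) ∧ (A i0).mulVec x = lam0 • x ∧
        ∀ (i : Fin k) (hi : (i : ℕ) < j), (A i).mulVec x = cfun i hi • x} with hK
      -- closedness
      have hKclosed : IsClosed K := by
        have h1 : IsClosed {x : Fin N → ℝ | ∀ r, 0 ≤ x r} := by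
          have : {x : Fin N → ℝ | ∀ r, 0 ≤ x r} = ⋂ r, {x : Fin N → ℝ | 0 ≤ x r} := by
            ext x; simp [Set.mem_iInter]
          rw [this]
          exact isClosed_iInter fun r => isClosed_le continuous_const (continuous_apply r)
        have hmv : ∀ (M : Matrix (Fin N) (Fin N) ℝ) (c : ℝ),
            IsClosed {x : Fin N → ℝ | M.mulVec x = c • x} := by
          intro M c
          apply isClosed_eq
          · refine continuous_pi fun r => ?_
            have : (fun x : Fin N → ℝ => M.mulVec x r) = fun x => ∑ j, M r j * x j := by
              funext x; exact mulVec_apply' M x r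
            rw [this]
            exact continuous_finset_sum _ fun j _ => continuous_const.mul (continuous_apply j)
          · exact continuous_id.const_smul c
        have h3 : ∀ i : Fin k, IsClosed {x : Fin N → ℝ |
            ∀ (hi : (i : ℕ) < j), (A i).mulVec x = cfun i hi • x} := by
          intro i
          by_cases hij : (i : ℕ) < j
          · have : {x : Fin N → ℝ | ∀ (hi : (i : ℕ) < j), (A i).mulVec x = cfun i hi • x}
                = {x : Fin N → ℝ | (A i).mulVec x = cfun i hij • x} := by
              ext x
              constructor
              · intro h; exact h hij
              · intro h hi; exact h
            rw [this]
            exact hmv _ _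
          · have : {x : Fin N → ℝ | ∀ (hi : (i : ℕ) < j), (A i).mulVec x = cfun i hi • x}
                = Set.univ := by
              ext x; simp [hij]
            rw [this]
            exact isClosed_univ
        have : K = {x : Fin N → ℝ | ∀ r, 0 ≤ x r} ∩
            ({x : Fin N → ℝ | (A i0).mulVec x = lam0 • x} ∩
             ⋂ i : Fin k, {x : Fin N → ℝ | ∀ (hi : (i : ℕ) < j), (A i).mulVec x = cfun i hi • x}) := by
          ext x
          exact ⟨fun h => ⟨h.1, ⟨h.2.1, Set.mem_iInter.mpr fun i => h.2.2 i⟩⟩,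
                 fun h => ⟨h.1, h.2.1, fun i hi => Set.mem_iInter.mp h.2.2 i hi⟩⟩
        rw [this]
        exact h1.inter ((hmv _ _).inter (isClosed_iInter h3))
      have hKnn : ∀ x ∈ K, ∀ r, 0 ≤ x r := fun x hx => hx.1
      have hKadd : ∀ x ∈ K, ∀ y ∈ K, x + y ∈ K := by
        rintro x ⟨hx1, hx2, hx3⟩ y ⟨hy1, hy2, hy3⟩
        refine ⟨fun r => add_nonneg (hx1 r) (hy1 r), ?_, ?_⟩
        · rw [Matrix.mulVec_add, hx2, hy2, smul_add]
        · intro i hi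
          rw [Matrix.mulVec_add, hx3 i hi, hy3 i hi, smul_add]
      have hKsmul : ∀ x ∈ K, ∀ c : ℝ, 0 ≤ c → c • x ∈ K := by
        rintro x ⟨hx1, hx2, hx3⟩ c hc
        refine ⟨fun r => mul_nonneg hc (hx1 r), ?_, ?_⟩
        · rw [Matrix.mulVec_smul, hx2, smul_comm]
        · intro i hi
          rw [Matrix.mulVec_smul, hx3 i hi, smul_comm]
      have hcommVec : ∀ (M M' : Matrix (Fin N) (Fin N) ℝ), M * M' = M' * M →
          ∀ x : Fin N → ℝ, M.mulVec (M'.mulVec x) = M'.mulVec (M.mulVec x) := by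
        intro M M' hMM' x
        rw [Matrix.mulVec_mulVec, Matrix.mulVec_mulVec, hMM']
      have hKT : ∀ x ∈ K, Tj.mulVec x ∈ K := by
        rintro x ⟨hx1, hx2, hx3⟩
        refine ⟨mulVec_nonneg (hA _) hx1, ?_, ?_⟩
        · rw [hcommVec _ _ (hcomm i0 ⟨j, hjlt⟩) x, hx2, Matrix.mulVec_smul]
        · intro i hi
          rw [hcommVec _ _ (hcomm i ⟨j, hjlt⟩) x, hx3 i hi, Matrix.mulVec_smul]
      have hwK : w ∈ K := ⟨hw1, hw3, fun i hi => hcfun i hi⟩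
      obtain ⟨w', hw'K, hw'ne, c, hc0, hc⟩ :=
        cone_eigen (hA ⟨j, hjlt⟩) hKclosed hKnn hKadd hKsmul hKT hwK hw2
      refine ⟨w', hw'K.1, hw'ne, hw'K.2.1, ?_⟩
      intro i hi
      rcases Nat.lt_succ_iff_lt_or_eq.mp hi with hij | hij
      · exact ⟨cfun i hij, hw'K.2.2 i hij⟩
      · have : i = ⟨j, hjlt⟩ := Fin.ext hij
        rw [this]
        exact ⟨c, hc⟩
  obtain ⟨w, hw1, hw2, hw3, hw4⟩ := main k le_rfl
  choose lamf hlamf using fun i : Fin k => hw4 i i.isLt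
  have hwpos : ∃ r, 0 < w r := by
    rcases Function.ne_iff.mp hw2 with ⟨r, hr⟩
    refine ⟨r, ?_⟩
    rcases lt_or_eq_of_le (hw1 r) with h | h
    · exact h
    · exact absurd h.symm hr
  obtain ⟨r0, hr0⟩ := hwpos
  have hlam0eq : lamf i0 = lam0 := by
    have h1 := hlamf i0
    have h2 := hw3
    rw [h1] at h2
    have := congrFun h2 r0
    have h3 : (lamf i0 • w) r0 = lamf i0 * w r0 := rfl
    have h4 : (lam0 • w) r0 = lam0 * w r0 := rfl
    rw [h3, h4] at this
    exact mul_right_cancel₀ hr0.ne' this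
  refine ⟨w, hw1, ⟨r0, hr0⟩, lamf, ?_, hlam0eq, ?_⟩
  · intro i
    have heig := hlamf i
    have hnn : 0 ≤ lamf i := by
      have h1 := congrFun heig r0
      have h2 : (lamf i • w) r0 = lamf i * w r0 := rfl
      rw [h2] at h1
      have h3 : 0 ≤ (A i).mulVec w r0 := mulVec_nonneg (hA i) hw1 r0
      nlinarith
    refine ⟨hnn, ?_, heig⟩
    have h5 : |lamf i| ≤ specRad (A i) := eigen_abs_le hw2 heig
    have h6 := hmax i
    calc lamf i ≤ |lamf i| := le_abs_self _
      _ ≤ specRad (A i) := h5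
      _ ≤ lam0 := h6
  · intro hcon
    have : i0 ∈ {i : Fin k | lamf i < specRad (A i0)} := by
      rw [hcon]; trivial
    rw [Set.mem_setOf_eq, hlam0eq] at this
    exact lt_irrefl _ this
end
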